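/- arXiv:1909.06542 — 5 statements merged into one kernel-verified Lean document; each statement's English description precedes it below -/
import Mathlib

section
/- Let ρ > 0, 0 < c₀ ≤ ρ, 0 < ε < 1, 0 < ε₀ < 1 with ε₀^{1/40} < 1/800, and 0 < δ < 1. Let φ̂ : ℤ → ℂ satisfy |φ̂(n)| < e^{−ρ|n|} for all n, let x, ω ∈ ℝ with x + nω − 1/2 ∉ ℤ for all n ∈ ℤ, and let E ∈ ℝ. Let I ⊂ ℤ be an interval of size N and let {I_α} be subintervals of I of size M = N^δ such that: (i) for every k ∈ I there is some α with [k − M/4, k + M/4] ∩ I ⊂ I_α; and (ii) for every α, H_{I_α}(x) − E is invertible with |G_{I_α}(x,E)(n₁,n₂)| < e^{−c₀(|n₁−n₂| − ε₀^{1/40}·M)} for all n₁, n₂ ∈ I_α. Then for N sufficiently large (depending on ρ, c₀, δ, ε₀), the matrix H_I(x) − E is invertible and G_I = G_I(x,E) satisfies |G_I(n₁,n₂)| < 2·e^{c₀·ε₀^{1/40}·M} for all n₁, n₂ ∈ I, and moreover |G_I(n₁,n₂)| < e^{−c₀|n₁−n₂|/2} whenever n₁, n₂ ∈ I and |n₁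 − n₂| > N/10. -/
open MeasureTheory

/-- The long-range Maryland operator restricted to a finite set `Λ ⊂ ℤ`:
`H_Λ(x)(n,n') = tan(π(x+nω))·δ_{nn'} + ε·φ̂(n-n')`. -/
noncomputable def Hmat (x ω ε : ℝ) (φh : ℤ → ℂ) (Λ : Finset ℤ) : Matrix Λ Λ ℂ :=
  fun n n' => (if (n : ℤ) = (n' : ℤ) then (Real.tan (Real.pi * (x + (n : ℤ) * ω)) : ℂ) else 0)
    + (ε : ℂ) * φh ((n : ℤ) - (n' : ℤ))

open Filter Real

lemma Hmat_entry (x ω ε E : ℝ) (φh : ℤ → ℂ) (Λ : Finset ℤ) (n m : Λ) :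
    (Hmat x ω ε φh Λ - (E:ℂ) • 1) n m
      = (if (n:ℤ) = (m:ℤ) then ((Real.tan (Real.pi * (x + (n:ℤ) * ω)) : ℂ) - E) else 0)
        + (ε:ℂ) * φh ((n:ℤ) - (m:ℤ)) := by
  simp only [Matrix.sub_apply, Matrix.smul_apply, Matrix.one_apply, Hmat, smul_eq_mul]
  by_cases h : (n:ℤ) = (m:ℤ)
  · have h' : n = m := Subtype.ext h
    simp [h, h']; ring
  · have h' : n ≠ m := fun e => h (congrArg _ e)
    simp [h, h']

lemma exists_N0 (c₀ δ : ℝ) (hc₀ : 0 < c₀) (hδ : 0 < δ) (hδ1 : δ < 1) :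
    ∃ N₀ : ℕ, 1 ≤ N₀ ∧ ∀ N : ℕ, N₀ ≤ N →
      (N:ℝ) ^ δ ≤ (N:ℝ) / 10 ∧
      (N:ℝ) * (N:ℝ) ^ δ * Real.exp (-(c₀ * (N:ℝ) ^ δ) / 20) ≤ 1/2 := by
  have h1 : ∀ᶠ t : ℝ in atTop, t ^ δ ≤ t / 10 := by
    have h10 : ∀ᶠ t : ℝ in atTop, (10:ℝ) ≤ t ^ (1 - δ) :=
      (tendsto_rpow_atTop (by linarith)).eventually_ge_atTop 10
    filter_upwards [h10, eventually_ge_atTop (1:ℝ)] with t h10 h1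
    have ht : (0:ℝ) < t := by linarith
    have : t ^ δ * 10 ≤ t ^ δ * t ^ (1 - δ) :=
      mul_le_mul_of_nonneg_left h10 (Real.rpow_nonneg ht.le δ)
    rw [← Real.rpow_add ht] at this
    simp only [add_sub_cancel, Real.rpow_one] at this
    linarith
  have h2 : ∀ᶠ t : ℝ in atTop,
      t * t ^ δ * Real.exp (-(c₀ * t ^ δ) / 20) ≤ 1/2 := by
    have hlog := (isLittleO_log_rpow_atTop hδ).bound
      (c := c₀ / (40 * (1 + δ))) (by positivity)
    have h40 : ∀ᶠ t : ℝ in atTop, Real.log 2 ≤ c₀ * t ^ δ / 40 := by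
      have := (tendsto_rpow_atTop hδ).eventually_ge_atTop (40 * Real.log 2 / c₀)
      filter_upwards [this] with t ht
      rw [div_le_iff₀ hc₀] at ht
      linarith
    filter_upwards [hlog, h40, eventually_ge_atTop (1:ℝ)] with t hlog h40 h1
    have ht : (0:ℝ) < t := by linarith
    have hlt : (0:ℝ) ≤ Real.log t := Real.log_nonneg h1
    have hrp : (0:ℝ) ≤ t ^ δ := Real.rpow_nonneg ht.le δ
    rw [Real.norm_eq_abs, Real.norm_eq_abs, abs_of_nonneg hlt, abs_of_nonneg hrp] at hlog
    have key : (1 + δ) * Real.log t + Real.log 2 ≤ c₀ * t ^ δ / 20 := by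
      have : (1 + δ) * Real.log t ≤ (1 + δ) * (c₀ / (40 * (1 + δ)) * t ^ δ) :=
        mul_le_mul_of_nonneg_left hlog (by linarith)
      have heq : (1 + δ) * (c₀ / (40 * (1 + δ)) * t ^ δ) = c₀ * t ^ δ / 40 := by
        field_simp
      rw [heq] at this
      linarith
    have hexp : t * t ^ δ = Real.exp ((1 + δ) * Real.log t) := by
      rw [Real.rpow_def_of_pos ht]
      rw [show (1 + δ) * Real.log t = Real.log t + Real.log t * δ by ring,
        Real.exp_add, Real.exp_log ht]
    rw [hexp, ← Real.exp_add]
    have : (1 + δ) * Real.log t + -(c₀ * t ^ δ) / 20 ≤ -Real.log 2 := by linarith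
    calc Real.exp ((1 + δ) * Real.log t + -(c₀ * t ^ δ) / 20)
        ≤ Real.exp (-Real.log 2) := Real.exp_le_exp.2 this
      _ = 1/2 := by rw [Real.exp_neg, Real.exp_log] <;> norm_num
  have hcast : Tendsto (fun N : ℕ => (N:ℝ)) atTop atTop := tendsto_natCast_atTop_atTop
  have hev : ∀ᶠ N : ℕ in atTop, (N:ℝ) ^ δ ≤ (N:ℝ) / 10 ∧
      (N:ℝ) * (N:ℝ) ^ δ * Real.exp (-(c₀ * (N:ℝ) ^ δ) / 20) ≤ 1/2 :=
    hcast.eventually (h1.and h2)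
  obtain ⟨N₀, hN₀⟩ := eventually_atTop.mp hev
  exact ⟨max N₀ 1, le_max_right _ _, fun N hN => hN₀ N (le_trans (le_max_left _ _) hN)⟩

set_option maxHeartbeats 1000000 in
/-- Resolvent-identity patching lemma: if an interval `I` of size `N` is covered by
subintervals `I_α` of size `M = N^δ` on which the Green's functions decay
exponentially, then the Green's function on `I` is bounded and decays exponentially
at distances `> N/10`. -/
theorem resolvent_patching
    (ρ c₀ ε ε₀ δ : ℝ) (hρ : 0 < ρ) (hc₀ : 0 < c₀) (hc₀ρ : c₀ ≤ ρ)
    (hε : 0 < ε) (hε1 : ε < 1) (hε₀ : 0 < ε₀) (hε₀1 : ε₀ < 1)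
    (hε₀small : ε₀ ^ ((1:ℝ)/40) < 1/800) (hδ : 0 < δ) (hδ1 : δ < 1) :
    ∃ N₀ : ℕ, ∀ N : ℕ, N₀ ≤ N →
      ∀ M : ℕ, (M : ℝ) = (N : ℝ) ^ δ →
      ∀ φh : ℤ → ℂ, (∀ n : ℤ, ‖φh n‖ < Real.exp (-ρ * |(n : ℝ)|)) →
      ∀ x ω : ℝ, (∀ n m : ℤ, x + n * ω - 1/2 ≠ (m : ℝ)) →
      ∀ E : ℝ,
      ∀ a b : ℤ, (Finset.Icc a b).card = N →
      ∀ (ι : Type) (Iα : ι → Finset ℤ),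
        (∀ α : ι, Iα α ⊆ Finset.Icc a b ∧ (Iα α).card = M ∧
          ∃ aα bα : ℤ, Iα α = Finset.Icc aα bα) →
        (∀ k ∈ Finset.Icc a b, ∃ α : ι,
          ∀ j ∈ Finset.Icc a b, |(j : ℝ) - (k : ℝ)| ≤ (M : ℝ) / 4 → j ∈ Iα α) →
        (∀ α : ι,
          IsUnit (Hmat x ω ε φh (Iα α) - (E : ℂ) • 1).det ∧
          ∀ n₁ n₂ : Iα α,
            ‖((Hmat x ω ε φh (Iα α) - (E : ℂ) • 1)⁻¹) n₁ n₂‖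
              < Real.exp (-c₀ * (|((n₁ : ℤ) : ℝ) - ((n₂ : ℤ) : ℝ)|
                  - ε₀ ^ ((1:ℝ)/40) * M))) →
        IsUnit (Hmat x ω ε φh (Finset.Icc a b) - (E : ℂ) • 1).det ∧
        (∀ n₁ n₂ : Finset.Icc a b,
          ‖((Hmat x ω ε φh (Finset.Icc a b) - (E : ℂ) • 1)⁻¹) n₁ n₂‖
            < 2 * Real.exp (c₀ * ε₀ ^ ((1:ℝ)/40) * M)) ∧
        (∀ n₁ n₂ : Finset.Icc a b,
          (N : ℝ) / 10 < |((n₁ : ℤ) : ℝ) - ((n₂ : ℤ) : ℝ)| →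
          ‖((Hmat x ω ε φh (Finset.Icc a b) - (E : ℂ) • 1)⁻¹) n₁ n₂‖
            < Real.exp (-c₀ * |((n₁ : ℤ) : ℝ) - ((n₂ : ℤ) : ℝ)| / 2)) := by
  obtain ⟨N₀, hN₀1, hN₀⟩ := exists_N0 c₀ δ hc₀ hδ hδ1
  refine ⟨N₀, ?_⟩
  intro N hN M hM φh hφ x ω hx E a b hcard ι Iα hIα hcover hG
  set I : Finset ℤ := Finset.Icc a b with hIdef
  obtain ⟨hMN10, hsmall⟩ := hN₀ N hN
  rw [← hM] at hMN10 hsmall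
  have hN1 : (1:ℝ) ≤ N := by exact_mod_cast le_trans hN₀1 hN
  have hM1 : (1:ℝ) ≤ M := by
    rw [hM]; exact Real.one_le_rpow hN1 hδ.le
  set e40 : ℝ := ε₀ ^ ((1:ℝ)/40) with he40
  have he40pos : 0 < e40 := Real.rpow_pos_of_pos hε₀ _
  set X : ℝ := c₀ * e40 * M with hX
  have hXnn : 0 ≤ X := by positivity
  have hX800 : X ≤ c₀ * M / 800 := by
    rw [hX]
    have : c₀ * e40 * M ≤ c₀ * (1/800) * M := by
      apply mul_le_mul_of_nonneg_right _ (by linarith)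
      exact mul_le_mul_of_nonneg_left hε₀small.le hc₀.le
    linarith
  -- nonempty index type
  have hIne : I.Nonempty := by
    apply Finset.card_pos.mp; rw [hcard]; omega
  have : Nonempty ↥I := ⟨⟨hIne.choose, hIne.choose_spec⟩⟩
  have hcardI : Fintype.card ↥I = N := by rw [Fintype.card_coe, hcard]
  -- choices
  choose α hα using fun n₂ : ↥I => hcover ↑n₂ n₂.2
  have hmem : ∀ n₂ : ↥I, (↑n₂ : ℤ) ∈ Iα (α n₂) := by
    intro n₂
    refine hα n₂ ↑n₂ n₂.2 ?_
    simp; positivity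
  have hcov : ∀ n₁ n₂ : ↥I, (↑n₁ : ℤ) ∉ Iα (α n₂) →
      (M:ℝ)/4 < |((n₁:ℤ):ℝ) - ((n₂:ℤ):ℝ)| := by
    intro n₁ n₂ h
    by_contra hle
    push_neg at hle
    exact h (hα n₂ ↑n₁ n₁.2 hle)
  have hsub : ∀ n₂ : ↥I, Iα (α n₂) ⊆ I := fun n₂ => (hIα (α n₂)).1
  have hcardJ : ∀ n₂ : ↥I, (Iα (α n₂)).card = M := fun n₂ => (hIα (α n₂)).2.1
  have hunit : ∀ n₂ : ↥I, IsUnit (Hmat x ω ε φh (Iα (α n₂)) - (E:ℂ) • 1).det :=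
    fun n₂ => (hG (α n₂)).1
  set A : Matrix ↥I ↥I ℂ := Hmat x ω ε φh I - (E:ℂ) • 1 with hAdef
  set G : (n₂ : ↥I) → Matrix (Iα (α n₂)) (Iα (α n₂)) ℂ :=
    fun n₂ => (Hmat x ω ε φh (Iα (α n₂)) - (E:ℂ) • 1)⁻¹ with hGdef
  have hGb : ∀ (n₂ : ↥I) (p r : Iα (α n₂)),
      ‖G n₂ p r‖ < Real.exp X * Real.exp (-c₀ * |((p:ℤ):ℝ) - ((r:ℤ):ℝ)|) := by
    intro n₂ p r
    have := (hG (α n₂)).2 p r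
    rw [← Real.exp_add]
    convert this using 2
    rw [hX, he40]; ring
  set Bm : Matrix ↥I ↥I ℂ := fun n₁ n₂ =>
    if h : (↑n₁ : ℤ) ∈ Iα (α n₂) then G n₂ ⟨↑n₁, h⟩ ⟨↑n₂, hmem n₂⟩ else 0 with hBdef
  -- product formula
  have hABsum : ∀ n₁ n₂ : ↥I, (A * Bm) n₁ n₂
      = ∑ m : Iα (α n₂),
          ((if (↑n₁:ℤ) = (↑m:ℤ) then ((Real.tan (Real.pi * (x + (↑n₁:ℤ) * ω)) : ℂ) - E) else 0)
            + (ε:ℂ) * φh ((↑n₁:ℤ) - (↑m:ℤ))) * G n₂ m ⟨↑n₂, hmem n₂⟩ := by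
    intro n₁ n₂
    rw [Matrix.mul_apply]
    set f : ℤ → ℂ := fun p =>
      ((if (↑n₁:ℤ) = p then ((Real.tan (Real.pi * (x + (↑n₁:ℤ) * ω)) : ℂ) - E) else 0)
        + (ε:ℂ) * φh ((↑n₁:ℤ) - p))
      * (if h : p ∈ Iα (α n₂) then G n₂ ⟨p, h⟩ ⟨↑n₂, hmem n₂⟩ else 0) with hf
    have h1 : ∀ m : ↥I, A n₁ m * Bm m n₂ = f ↑m := by
      intro m
      rw [hAdef, Hmat_entry, hf]
    calc ∑ m : ↥I, A n₁ m * Bm m n₂ = ∑ m : ↥I, f ↑m := by simp_rw [h1]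
      _ = ∑ p ∈ I, f p := Finset.sum_coe_sort I f
      _ = ∑ p ∈ Iα (α n₂), f p :=
          (Finset.sum_subset (hsub n₂) (fun p _ hnp => by simp [hf, hnp])).symm
      _ = ∑ m : Iα (α n₂), f ↑m := (Finset.sum_coe_sort (Iα (α n₂)) f).symm
      _ = _ := by
          apply Finset.sum_congr rfl
          intro m _
          rw [hf]
          simp only [dif_pos m.2]
  have hAB1 : ∀ n₁ n₂ : ↥I, (↑n₁:ℤ) ∈ Iα (α n₂) →
      (A * Bm) n₁ n₂ = if n₁ = n₂ then 1 else 0 := by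
    intro n₁ n₂ h
    rw [hABsum]
    have h2 : ∀ m : Iα (α n₂),
        ((if (↑n₁:ℤ) = (↑m:ℤ) then ((Real.tan (Real.pi * (x + (↑n₁:ℤ) * ω)) : ℂ) - E) else 0)
          + (ε:ℂ) * φh ((↑n₁:ℤ) - (↑m:ℤ)))
        = (Hmat x ω ε φh (Iα (α n₂)) - (E:ℂ) • 1) ⟨↑n₁, h⟩ m := by
      intro m
      rw [Hmat_entry]
    calc ∑ m : Iα (α n₂), _ * G n₂ m ⟨↑n₂, hmem n₂⟩
        = ∑ m : Iα (α n₂),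
            (Hmat x ω ε φh (Iα (α n₂)) - (E:ℂ) • 1) ⟨↑n₁, h⟩ m * G n₂ m ⟨↑n₂, hmem n₂⟩ := by
          simp_rw [h2]
      _ = ((Hmat x ω ε φh (Iα (α n₂)) - (E:ℂ) • 1) * G n₂) ⟨↑n₁, h⟩ ⟨↑n₂, hmem n₂⟩ :=
          (Matrix.mul_apply).symm
      _ = (1 : Matrix (Iα (α n₂)) (Iα (α n₂)) ℂ) ⟨↑n₁, h⟩ ⟨↑n₂, hmem n₂⟩ := by
          rw [Matrix.mul_nonsing_inv _ (hunit n₂)]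
      _ = if n₁ = n₂ then 1 else 0 := by
          rw [Matrix.one_apply]
          by_cases hnn : n₁ = n₂
          · simp [hnn, Subtype.ext_iff]
          · have : (↑n₁:ℤ) ≠ (↑n₂:ℤ) := fun e => hnn (Subtype.ext e)
            simp [hnn, Subtype.ext_iff, this]
  have hAB2 : ∀ n₁ n₂ : ↥I, (↑n₁:ℤ) ∉ Iα (α n₂) →
      (A * Bm) n₁ n₂ = ∑ m : Iα (α n₂), (ε:ℂ) * φh (↑n₁ - ↑m) * G n₂ m ⟨↑n₂, hmem n₂⟩ := by
    intro n₁ n₂ h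
    rw [hABsum]
    apply Finset.sum_congr rfl
    intro m _
    rw [if_neg (fun e : (↑n₁:ℤ) = (↑m:ℤ) => h (e ▸ m.2)), zero_add]
  set K : Matrix ↥I ↥I ℂ := A * Bm - 1 with hKdef
  set q : ℝ := M * Real.exp X * Real.exp (-(c₀ * M) / 16) with hq
  have hqpos : 0 < q := by positivity
  have hqN : q * N ≤ 1/2 := by
    have h0 : (0:ℝ) ≤ c₀ * M := by positivity
    have h1 : Real.exp X * Real.exp (-(c₀ * M) / 16) ≤ Real.exp (-(c₀ * M) / 20) := by
      rw [← Real.exp_add]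
      apply Real.exp_le_exp.2
      linarith
    calc q * N = (N * M) * (Real.exp X * Real.exp (-(c₀ * M) / 16)) := by rw [hq]; ring
      _ ≤ (N * M) * Real.exp (-(c₀ * M) / 20) :=
          mul_le_mul_of_nonneg_left h1 (by positivity)
      _ = N * M * Real.exp (-(c₀ * M) / 20) := by ring
      _ ≤ 1/2 := hsmall
  have hKb : ∀ n₁ n₂ : ↥I,
      ‖K n₁ n₂‖ ≤ q * Real.exp (-(3*c₀/4) * |((n₁:ℤ):ℝ) - ((n₂:ℤ):ℝ)|) := by
    intro n₁ n₂
    by_cases h : (↑n₁:ℤ) ∈ Iα (α n₂)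
    · have hK0 : K n₁ n₂ = 0 := by
        rw [hKdef, Matrix.sub_apply, hAB1 n₁ n₂ h, Matrix.one_apply, sub_self]
      rw [hK0, norm_zero]
      positivity
    · have hd := hcov n₁ n₂ h
      have hKval : K n₁ n₂ = ∑ m : Iα (α n₂), (ε:ℂ) * φh (↑n₁ - ↑m) * G n₂ m ⟨↑n₂, hmem n₂⟩ := by
        rw [hKdef, Matrix.sub_apply, hAB2 n₁ n₂ h, Matrix.one_apply,
          if_neg (fun e : n₁ = n₂ => h (e ▸ hmem n₂)), sub_zero]
      have hterm : ∀ m : Iα (α n₂),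
          ‖(ε:ℂ) * φh (↑n₁ - ↑m) * G n₂ m ⟨↑n₂, hmem n₂⟩‖
            ≤ Real.exp X * Real.exp (-c₀ * |((n₁:ℤ):ℝ) - ((n₂:ℤ):ℝ)|) := by
        intro m
        rw [norm_mul, norm_mul]
        have hεn : ‖(ε:ℂ)‖ = ε := by
          rw [show ‖(ε:ℂ)‖ = |ε| from by rw [Complex.norm_real, Real.norm_eq_abs], abs_of_pos hε]
        have hφb : ‖φh ((↑n₁:ℤ) - (↑m:ℤ))‖ ≤ Real.exp (-c₀ * |((n₁:ℤ):ℝ) - ((m:ℤ):ℝ)|) := by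
          refine le_trans (hφ _).le (Real.exp_le_exp.2 ?_)
          have : |(((↑n₁:ℤ) - (↑m:ℤ) : ℤ) : ℝ)| = |((n₁:ℤ):ℝ) - ((m:ℤ):ℝ)| := by push_cast; ring_nf
          rw [this]
          have habs : (0:ℝ) ≤ |((n₁:ℤ):ℝ) - ((m:ℤ):ℝ)| := abs_nonneg _
          nlinarith
        have hGm := (hGb n₂ m ⟨↑n₂, hmem n₂⟩).le
        have h2 : ‖(ε:ℂ)‖ * ‖φh ((↑n₁:ℤ) - (↑m:ℤ))‖ ≤ Real.exp (-c₀ * |((n₁:ℤ):ℝ) - ((m:ℤ):ℝ)|) := by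
          rw [hεn]
          calc ε * ‖φh ((↑n₁:ℤ) - (↑m:ℤ))‖ ≤ 1 * Real.exp (-c₀ * |((n₁:ℤ):ℝ) - ((m:ℤ):ℝ)|) := by
                apply mul_le_mul hε1.le hφb (norm_nonneg _) zero_le_one
            _ = _ := one_mul _
        calc ‖(ε:ℂ)‖ * ‖φh ((↑n₁:ℤ) - (↑m:ℤ))‖ * ‖G n₂ m ⟨↑n₂, hmem n₂⟩‖
            ≤ Real.exp (-c₀ * |((n₁:ℤ):ℝ) - ((m:ℤ):ℝ)|)
              * (Real.exp X * Real.exp (-c₀ * |((m:ℤ):ℝ) - ((n₂:ℤ):ℝ)|)) := by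
              apply mul_le_mul h2 hGm (norm_nonneg _) (Real.exp_pos _).le
          _ ≤ Real.exp X * Real.exp (-c₀ * |((n₁:ℤ):ℝ) - ((n₂:ℤ):ℝ)|) := by
              rw [← Real.exp_add, ← Real.exp_add, ← Real.exp_add]
              apply Real.exp_le_exp.2
              have htri : |((n₁:ℤ):ℝ) - ((n₂:ℤ):ℝ)|
                  ≤ |((n₁:ℤ):ℝ) - ((m:ℤ):ℝ)| + |((m:ℤ):ℝ) - ((n₂:ℤ):ℝ)| := abs_sub_le _ _ _
              nlinarith
      have hsum : ‖K n₁ n₂‖ ≤ M * (Real.exp X * Real.exp (-c₀ * |((n₁:ℤ):ℝ) - ((n₂:ℤ):ℝ)|)) := by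
        rw [hKval]
        refine le_trans (norm_sum_le _ _) ?_
        calc ∑ m : Iα (α n₂), ‖(ε:ℂ) * φh (↑n₁ - ↑m) * G n₂ m ⟨↑n₂, hmem n₂⟩‖
            ≤ ∑ _m : Iα (α n₂), Real.exp X * Real.exp (-c₀ * |((n₁:ℤ):ℝ) - ((n₂:ℤ):ℝ)|) :=
              Finset.sum_le_sum (fun m _ => hterm m)
          _ = M * (Real.exp X * Real.exp (-c₀ * |((n₁:ℤ):ℝ) - ((n₂:ℤ):ℝ)|)) := by
              rw [Finset.sum_const, Finset.card_univ, Fintype.card_coe, hcardJ, nsmul_eq_mul]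
      refine le_trans hsum ?_
      have h3 : Real.exp (-c₀ * |((n₁:ℤ):ℝ) - ((n₂:ℤ):ℝ)|)
          ≤ Real.exp (-(c₀ * M) / 16) * Real.exp (-(3*c₀/4) * |((n₁:ℤ):ℝ) - ((n₂:ℤ):ℝ)|) := by
        rw [← Real.exp_add]
        apply Real.exp_le_exp.2
        have h4 := mul_lt_mul_of_pos_left hd hc₀
        linarith
      calc (M:ℝ) * (Real.exp X * Real.exp (-c₀ * |((n₁:ℤ):ℝ) - ((n₂:ℤ):ℝ)|))
          ≤ (M:ℝ) * (Real.exp X * (Real.exp (-(c₀ * M) / 16)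
              * Real.exp (-(3*c₀/4) * |((n₁:ℤ):ℝ) - ((n₂:ℤ):ℝ)|))) := by
            apply mul_le_mul_of_nonneg_left _ (by positivity)
            exact mul_le_mul_of_nonneg_left h3 (Real.exp_pos _).le
        _ = q * Real.exp (-(3*c₀/4) * |((n₁:ℤ):ℝ) - ((n₂:ℤ):ℝ)|) := by rw [hq]; ring
  have hKrow : ∀ n₁ : ↥I, ∑ n₂ : ↥I, ‖K n₁ n₂‖ ≤ 1/2 := by
    intro n₁
    calc ∑ n₂ : ↥I, ‖K n₁ n₂‖
        ≤ ∑ _n₂ : ↥I, q := by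
          apply Finset.sum_le_sum
          intro n₂ _
          refine le_trans (hKb n₁ n₂) ?_
          nth_rewrite 2 [show q = q * 1 by ring]
          apply mul_le_mul_of_nonneg_left _ hqpos.le
          rw [Real.exp_le_one_iff]
          have : (0:ℝ) ≤ |((n₁:ℤ):ℝ) - ((n₂:ℤ):ℝ)| := abs_nonneg _
          nlinarith
      _ = q * N := by rw [Finset.sum_const, Finset.card_univ, hcardI, nsmul_eq_mul]; ring
      _ ≤ 1/2 := hqN
  -- invertibility of A * Bm
  have hker : ∀ v : ↥I → ℂ, (A * Bm).mulVec v = 0 → v = 0 := by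
    intro v hv
    have hABK : A * Bm = 1 + K := by rw [hKdef]; abel
    rw [hABK] at hv
    have hvK : ∀ n : ↥I, v n = -((K.mulVec v) n) := by
      intro n
      have h2 : v n + K.mulVec v n = 0 := by
        have h3 := congrFun hv n
        rw [Matrix.add_mulVec, Matrix.one_mulVec] at h3
        exact h3
      exact eq_neg_of_add_eq_zero_left h2
    obtain ⟨n, -, hmax⟩ := Finset.exists_max_image Finset.univ (fun m : ↥I => ‖v m‖)
      Finset.univ_nonempty
    have hmax' : ∀ m : ↥I, ‖v m‖ ≤ ‖v n‖ := fun m => hmax m (Finset.mem_univ m)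
    have hkey : ‖v n‖ ≤ (1/2) * ‖v n‖ := by
      calc ‖v n‖ = ‖(K.mulVec v) n‖ := by rw [hvK n, norm_neg]
        _ = ‖∑ m : ↥I, K n m * v m‖ := by simp [Matrix.mulVec, dotProduct]
        _ ≤ ∑ m : ↥I, ‖K n m * v m‖ := norm_sum_le _ _
        _ ≤ ∑ m : ↥I, ‖K n m‖ * ‖v n‖ := by
            apply Finset.sum_le_sum; intro m _
            rw [norm_mul]
            exact mul_le_mul_of_nonneg_left (hmax' m) (norm_nonneg _)
        _ = (∑ m : ↥I, ‖K n m‖) * ‖v n‖ := (Finset.sum_mul _ _ _).symm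
        _ ≤ (1/2) * ‖v n‖ := mul_le_mul_of_nonneg_right (hKrow n) (norm_nonneg _)
    have hvn0 : ‖v n‖ ≤ 0 := by linarith
    funext m
    have hm0 : ‖v m‖ ≤ 0 := le_trans (hmax' m) hvn0
    simpa using norm_le_zero_iff.mp hm0
  have huAB : IsUnit (A * Bm) := by
    rw [← Matrix.mulVec_injective_iff_isUnit]
    intro v w hvw
    have := hker (v - w) (by rw [Matrix.mulVec_sub, hvw, sub_self])
    exact sub_eq_zero.mp this
  have hudet : IsUnit (A * Bm).det := (Matrix.isUnit_iff_isUnit_det _).mp huAB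
  have hAdet : IsUnit A.det := by
    rw [Matrix.det_mul] at hudet
    exact isUnit_of_mul_isUnit_left hudet
  set R : Matrix ↥I ↥I ℂ := (A * Bm)⁻¹ with hRdef
  have hright : (A * Bm) * R = 1 := Matrix.mul_nonsing_inv _ hudet
  have hAinv : A⁻¹ = Bm * R :=
    Matrix.inv_eq_right_inv (by rw [← Matrix.mul_assoc]; exact hright)
  set S : Matrix ↥I ↥I ℂ := R - 1 with hSdef
  have hRS : R = 1 + S := by rw [hSdef]; abel
  have hSKR : S = -(K * R) := by
    have hKR : K * R = 1 - R := by
      rw [hKdef, Matrix.sub_mul, hright, Matrix.one_mul]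
    rw [hKR, hSdef]
    abel
  have hSentry : ∀ n m : ↥I, ‖S n m‖ ≤ ‖K n m‖ + ∑ k : ↥I, ‖K n k‖ * ‖S k m‖ := by
    intro n m
    have h1 : S n m = -(K n m + ∑ k : ↥I, K n k * S k m) := by
      have h2 : S n m = (-(K * R)) n m := by rw [← hSKR]
      rw [h2, hRS, Matrix.mul_add, Matrix.mul_one, Matrix.neg_apply, Matrix.add_apply,
        Matrix.mul_apply]
    rw [h1, norm_neg]
    refine le_trans (norm_add_le _ _) (add_le_add le_rfl ?_)
    refine le_trans (norm_sum_le _ _) ?_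
    apply Finset.sum_le_sum
    intro k _
    rw [norm_mul]
  have hneP : (Finset.univ : Finset (↥I × ↥I)).Nonempty := Finset.univ_nonempty
  set F : ↥I × ↥I → ℝ :=
    fun p => ‖S p.1 p.2‖ * Real.exp ((3*c₀/4) * |((p.1:ℤ):ℝ) - ((p.2:ℤ):ℝ)|) with hF
  set W : ℝ := Finset.univ.sup' hneP F with hW
  have hWge : ∀ n m : ↥I,
      ‖S n m‖ * Real.exp ((3*c₀/4) * |((n:ℤ):ℝ) - ((m:ℤ):ℝ)|) ≤ W :=
    fun n m => Finset.le_sup' F (Finset.mem_univ (n, m))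
  have hWnn : 0 ≤ W := by
    obtain ⟨n⟩ := (inferInstance : Nonempty ↥I)
    exact le_trans (by positivity) (hWge n n)
  have hSW : ∀ n m : ↥I, ‖S n m‖ ≤ W * Real.exp (-(3*c₀/4) * |((n:ℤ):ℝ) - ((m:ℤ):ℝ)|) := by
    intro n m
    have h1 := mul_le_mul_of_nonneg_right (hWge n m)
      (Real.exp_pos (-(3*c₀/4) * |((n:ℤ):ℝ) - ((m:ℤ):ℝ)|)).le
    have e1 : (3*c₀/4) * |((n:ℤ):ℝ) - ((m:ℤ):ℝ)| + -(3*c₀/4) * |((n:ℤ):ℝ) - ((m:ℤ):ℝ)| = 0 := by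
      ring
    rwa [mul_assoc, ← Real.exp_add, e1, Real.exp_zero, mul_one] at h1
  have hWle : W ≤ 2 * q := by
    obtain ⟨p, -, hpW⟩ := Finset.exists_mem_eq_sup' hneP F
    have hKnm := hKb p.1 p.2
    have hterm2 : ∀ k : ↥I, ‖K p.1 k‖ * ‖S k p.2‖
        * Real.exp ((3*c₀/4) * |((p.1:ℤ):ℝ) - ((p.2:ℤ):ℝ)|) ≤ q * W := by
      intro k
      have h1 : ‖K p.1 k‖ * ‖S k p.2‖
          ≤ (q * Real.exp (-(3*c₀/4) * |((p.1:ℤ):ℝ) - ((k:ℤ):ℝ)|))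
            * (W * Real.exp (-(3*c₀/4) * |((k:ℤ):ℝ) - ((p.2:ℤ):ℝ)|)) :=
        mul_le_mul (hKb p.1 k) (hSW k p.2) (norm_nonneg _) (by positivity)
      have h2 := mul_le_mul_of_nonneg_right h1
        (Real.exp_pos ((3*c₀/4) * |((p.1:ℤ):ℝ) - ((p.2:ℤ):ℝ)|)).le
      refine le_trans h2 ?_
      have htri : |((p.1:ℤ):ℝ) - ((p.2:ℤ):ℝ)|
          ≤ |((p.1:ℤ):ℝ) - ((k:ℤ):ℝ)| + |((k:ℤ):ℝ) - ((p.2:ℤ):ℝ)| := abs_sub_le _ _ _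
      have hexp1 : Real.exp (-(3*c₀/4) * |((p.1:ℤ):ℝ) - ((k:ℤ):ℝ)|)
          * Real.exp (-(3*c₀/4) * |((k:ℤ):ℝ) - ((p.2:ℤ):ℝ)|)
          * Real.exp ((3*c₀/4) * |((p.1:ℤ):ℝ) - ((p.2:ℤ):ℝ)|) ≤ 1 := by
        rw [← Real.exp_add, ← Real.exp_add]
        rw [show (1:ℝ) = Real.exp 0 from (Real.exp_zero).symm]
        apply Real.exp_le_exp.2
        nlinarith
      calc q * Real.exp (-(3*c₀/4) * |((p.1:ℤ):ℝ) - ((k:ℤ):ℝ)|)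
            * (W * Real.exp (-(3*c₀/4) * |((k:ℤ):ℝ) - ((p.2:ℤ):ℝ)|))
            * Real.exp ((3*c₀/4) * |((p.1:ℤ):ℝ) - ((p.2:ℤ):ℝ)|)
          = (q * W) * (Real.exp (-(3*c₀/4) * |((p.1:ℤ):ℝ) - ((k:ℤ):ℝ)|)
              * Real.exp (-(3*c₀/4) * |((k:ℤ):ℝ) - ((p.2:ℤ):ℝ)|)
              * Real.exp ((3*c₀/4) * |((p.1:ℤ):ℝ) - ((p.2:ℤ):ℝ)|)) := by ring
        _ ≤ (q * W) * 1 := by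
            apply mul_le_mul_of_nonneg_left hexp1 (by positivity)
        _ = q * W := mul_one _
    have hWeq : W = ‖S p.1 p.2‖ * Real.exp ((3*c₀/4) * |((p.1:ℤ):ℝ) - ((p.2:ℤ):ℝ)|) := hpW
    have hstep : W ≤ q + q * N * W := by
      calc W = ‖S p.1 p.2‖ * Real.exp ((3*c₀/4) * |((p.1:ℤ):ℝ) - ((p.2:ℤ):ℝ)|) := hWeq
        _ ≤ (‖K p.1 p.2‖ + ∑ k : ↥I, ‖K p.1 k‖ * ‖S k p.2‖)
              * Real.exp ((3*c₀/4) * |((p.1:ℤ):ℝ) - ((p.2:ℤ):ℝ)|) :=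
            mul_le_mul_of_nonneg_right (hSentry p.1 p.2) (Real.exp_pos _).le
        _ = ‖K p.1 p.2‖ * Real.exp ((3*c₀/4) * |((p.1:ℤ):ℝ) - ((p.2:ℤ):ℝ)|)
            + ∑ k : ↥I, ‖K p.1 k‖ * ‖S k p.2‖
                * Real.exp ((3*c₀/4) * |((p.1:ℤ):ℝ) - ((p.2:ℤ):ℝ)|) := by
            rw [add_mul, Finset.sum_mul]
        _ ≤ q + ∑ _k : ↥I, q * W := by
            apply add_le_add
            · have h1 := mul_le_mul_of_nonneg_right hKnm
                (Real.exp_pos ((3*c₀/4) * |((p.1:ℤ):ℝ) - ((p.2:ℤ):ℝ)|)).le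
              have e1 : -(3*c₀/4) * |((p.1:ℤ):ℝ) - ((p.2:ℤ):ℝ)|
                  + (3*c₀/4) * |((p.1:ℤ):ℝ) - ((p.2:ℤ):ℝ)| = 0 := by ring
              rwa [mul_assoc, ← Real.exp_add, e1, Real.exp_zero, mul_one] at h1
            · exact Finset.sum_le_sum (fun k _ => hterm2 k)
        _ = q + q * N * W := by
            rw [Finset.sum_const, Finset.card_univ, hcardI, nsmul_eq_mul]; ring
    have h5 : q * N * W ≤ (1/2) * W := by
      apply mul_le_mul_of_nonneg_right hqN hWnn
    linarith
  have hSb : ∀ n m : ↥I,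
      ‖S n m‖ ≤ 2 * q * Real.exp (-(3*c₀/4) * |((n:ℤ):ℝ) - ((m:ℤ):ℝ)|) :=
    fun n m => le_trans (hSW n m)
      (mul_le_mul_of_nonneg_right hWle (Real.exp_pos _).le)
  -- entry bounds for Bm
  have hBlt : ∀ n₁ n₂ : ↥I, ‖Bm n₁ n₂‖ < Real.exp X := by
    intro n₁ n₂
    by_cases h : (↑n₁:ℤ) ∈ Iα (α n₂)
    · have hBeq : Bm n₁ n₂ = G n₂ ⟨↑n₁, h⟩ ⟨↑n₂, hmem n₂⟩ := by
        rw [hBdef]; exact dif_pos h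
      rw [hBeq]
      refine lt_of_lt_of_le (hGb n₂ _ _) ?_
      nth_rewrite 2 [show Real.exp X = Real.exp X * 1 from (mul_one _).symm]
      apply mul_le_mul_of_nonneg_left _ (Real.exp_pos _).le
      rw [Real.exp_le_one_iff]
      have : (0:ℝ) ≤ |((n₁:ℤ):ℝ) - ((n₂:ℤ):ℝ)| := abs_nonneg _
      nlinarith
    · have hBeq : Bm n₁ n₂ = 0 := by rw [hBdef]; exact dif_neg h
      rw [hBeq, norm_zero]
      exact Real.exp_pos _
  have hBle : ∀ n₁ n₂ : ↥I,
      ‖Bm n₁ n₂‖ ≤ Real.exp X * Real.exp (-(3*c₀/4) * |((n₁:ℤ):ℝ) - ((n₂:ℤ):ℝ)|) := by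
    intro n₁ n₂
    by_cases h : (↑n₁:ℤ) ∈ Iα (α n₂)
    · have hBeq : Bm n₁ n₂ = G n₂ ⟨↑n₁, h⟩ ⟨↑n₂, hmem n₂⟩ := by
        rw [hBdef]; exact dif_pos h
      rw [hBeq]
      refine le_trans (hGb n₂ _ _).le ?_
      apply mul_le_mul_of_nonneg_left _ (Real.exp_pos _).le
      apply Real.exp_le_exp.2
      have : (0:ℝ) ≤ |((n₁:ℤ):ℝ) - ((n₂:ℤ):ℝ)| := abs_nonneg _
      nlinarith
    · have hBeq : Bm n₁ n₂ = 0 := by rw [hBdef]; exact dif_neg h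
      rw [hBeq, norm_zero]
      positivity
  -- bound on (Bm * S) entries
  have hBS : ∀ n₁ n₂ : ↥I, ‖(Bm * S) n₁ n₂‖
      ≤ Real.exp X * Real.exp (-(3*c₀/4) * |((n₁:ℤ):ℝ) - ((n₂:ℤ):ℝ)|) := by
    intro n₁ n₂
    have hterm : ∀ k : ↥I, ‖Bm n₁ k * S k n₂‖
        ≤ (Real.exp X * (2*q)) * Real.exp (-(3*c₀/4) * |((n₁:ℤ):ℝ) - ((n₂:ℤ):ℝ)|) := by
      intro k
      rw [norm_mul]
      have h1 : ‖Bm n₁ k‖ * ‖S k n₂‖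
          ≤ (Real.exp X * Real.exp (-(3*c₀/4) * |((n₁:ℤ):ℝ) - ((k:ℤ):ℝ)|))
            * (2 * q * Real.exp (-(3*c₀/4) * |((k:ℤ):ℝ) - ((n₂:ℤ):ℝ)|)) :=
        mul_le_mul (hBle n₁ k) (hSb k n₂) (norm_nonneg _) (by positivity)
      refine le_trans h1 ?_
      have htri : |((n₁:ℤ):ℝ) - ((n₂:ℤ):ℝ)|
          ≤ |((n₁:ℤ):ℝ) - ((k:ℤ):ℝ)| + |((k:ℤ):ℝ) - ((n₂:ℤ):ℝ)| := abs_sub_le _ _ _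
      have h2 : Real.exp (-(3*c₀/4) * |((n₁:ℤ):ℝ) - ((k:ℤ):ℝ)|)
          * Real.exp (-(3*c₀/4) * |((k:ℤ):ℝ) - ((n₂:ℤ):ℝ)|)
          ≤ Real.exp (-(3*c₀/4) * |((n₁:ℤ):ℝ) - ((n₂:ℤ):ℝ)|) := by
        rw [← Real.exp_add]
        apply Real.exp_le_exp.2
        nlinarith
      calc Real.exp X * Real.exp (-(3*c₀/4) * |((n₁:ℤ):ℝ) - ((k:ℤ):ℝ)|)
            * (2 * q * Real.exp (-(3*c₀/4) * |((k:ℤ):ℝ) - ((n₂:ℤ):ℝ)|))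
          = (Real.exp X * (2*q)) * (Real.exp (-(3*c₀/4) * |((n₁:ℤ):ℝ) - ((k:ℤ):ℝ)|)
              * Real.exp (-(3*c₀/4) * |((k:ℤ):ℝ) - ((n₂:ℤ):ℝ)|)) := by ring
        _ ≤ (Real.exp X * (2*q)) * Real.exp (-(3*c₀/4) * |((n₁:ℤ):ℝ) - ((n₂:ℤ):ℝ)|) := by
            apply mul_le_mul_of_nonneg_left h2 (by positivity)
    have hsum : ‖(Bm * S) n₁ n₂‖
        ≤ N * ((Real.exp X * (2*q)) * Real.exp (-(3*c₀/4) * |((n₁:ℤ):ℝ) - ((n₂:ℤ):ℝ)|)) := by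
      rw [Matrix.mul_apply]
      refine le_trans (norm_sum_le _ _) ?_
      calc ∑ k : ↥I, ‖Bm n₁ k * S k n₂‖
          ≤ ∑ _k : ↥I, (Real.exp X * (2*q)) * Real.exp (-(3*c₀/4) * |((n₁:ℤ):ℝ) - ((n₂:ℤ):ℝ)|) :=
            Finset.sum_le_sum (fun k _ => hterm k)
        _ = N * ((Real.exp X * (2*q)) * Real.exp (-(3*c₀/4) * |((n₁:ℤ):ℝ) - ((n₂:ℤ):ℝ)|)) := by
            rw [Finset.sum_const, Finset.card_univ, hcardI, nsmul_eq_mul]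
    refine le_trans hsum ?_
    calc (N:ℝ) * ((Real.exp X * (2*q)) * Real.exp (-(3*c₀/4) * |((n₁:ℤ):ℝ) - ((n₂:ℤ):ℝ)|))
        = (2 * (q * N)) * (Real.exp X * Real.exp (-(3*c₀/4) * |((n₁:ℤ):ℝ) - ((n₂:ℤ):ℝ)|)) := by
          ring
      _ ≤ 1 * (Real.exp X * Real.exp (-(3*c₀/4) * |((n₁:ℤ):ℝ) - ((n₂:ℤ):ℝ)|)) := by
          apply mul_le_mul_of_nonneg_right _ (by positivity)
          linarith
      _ = _ := one_mul _
  have hAinvE : ∀ n₁ n₂ : ↥I, A⁻¹ n₁ n₂ = Bm n₁ n₂ + (Bm * S) n₁ n₂ := by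
    intro n₁ n₂
    rw [hAinv, hRS, Matrix.mul_add, Matrix.mul_one, Matrix.add_apply]
  refine ⟨hAdet, ?_, ?_⟩
  · -- uniform bound
    intro n₁ n₂
    rw [hAinvE]
    refine lt_of_le_of_lt (norm_add_le _ _) ?_
    have h1 := hBlt n₁ n₂
    have h2 : ‖(Bm * S) n₁ n₂‖ ≤ Real.exp X := by
      refine le_trans (hBS n₁ n₂) ?_
      nth_rewrite 2 [show Real.exp X = Real.exp X * 1 from (mul_one _).symm]
      apply mul_le_mul_of_nonneg_left _ (Real.exp_pos _).le
      rw [Real.exp_le_one_iff]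
      have : (0:ℝ) ≤ |((n₁:ℤ):ℝ) - ((n₂:ℤ):ℝ)| := abs_nonneg _
      nlinarith
    calc ‖Bm n₁ n₂‖ + ‖(Bm * S) n₁ n₂‖ < Real.exp X + Real.exp X :=
          add_lt_add_of_lt_of_le h1 h2
      _ = 2 * Real.exp X := by ring
  · -- decay bound
    intro n₁ n₂ hd10
    have hdpos : (0:ℝ) < |((n₁:ℤ):ℝ) - ((n₂:ℤ):ℝ)| := by
      refine lt_trans ?_ hd10
      positivity
    have hB0 : Bm n₁ n₂ = 0 := by
      rw [hBdef]
      refine dif_neg ?_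
      intro h
      obtain ⟨aα, bα, hIcc⟩ := (hIα (α n₂)).2.2
      have hm1 : (↑n₁:ℤ) ∈ Finset.Icc aα bα := hIcc ▸ h
      have hm2 : (↑n₂:ℤ) ∈ Finset.Icc aα bα := hIcc ▸ hmem n₂
      rw [Finset.mem_Icc] at hm1 hm2
      have hcJ := hcardJ n₂
      rw [hIcc, Int.card_Icc] at hcJ
      have h3 : |(↑n₁ - ↑n₂ : ℤ)| ≤ (M:ℤ) - 1 := by rw [abs_le]; omega
      have h4 : |((n₁:ℤ):ℝ) - ((n₂:ℤ):ℝ)| ≤ (M:ℝ) - 1 := by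
        rw [← Int.cast_sub, ← Int.cast_abs]
        exact_mod_cast h3
      linarith
    rw [hAinvE, hB0, zero_add]
    refine lt_of_le_of_lt (hBS n₁ n₂) ?_
    have hXlt : X < c₀ * |((n₁:ℤ):ℝ) - ((n₂:ℤ):ℝ)| / 4 := by
      have hMd : (M:ℝ) < |((n₁:ℤ):ℝ) - ((n₂:ℤ):ℝ)| := lt_of_le_of_lt hMN10 hd10
      have h5 : c₀ * M / 800 < c₀ * |((n₁:ℤ):ℝ) - ((n₂:ℤ):ℝ)| / 4 := by
        have := mul_lt_mul_of_pos_left hMd hc₀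
        nlinarith
      linarith
    calc Real.exp X * Real.exp (-(3*c₀/4) * |((n₁:ℤ):ℝ) - ((n₂:ℤ):ℝ)|)
        < Real.exp (c₀ * |((n₁:ℤ):ℝ) - ((n₂:ℤ):ℝ)| / 4)
            * Real.exp (-(3*c₀/4) * |((n₁:ℤ):ℝ) - ((n₂:ℤ):ℝ)|) :=
          mul_lt_mul_of_pos_right (Real.exp_lt_exp.2 hXlt) (Real.exp_pos _)
      _ = Real.exp (-c₀ * |((n₁:ℤ):ℝ) - ((n₂:ℤ):ℝ)| / 2) := by
          rw [← Real.exp_add]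
          congr 1
          ring
end

section
/- There is an absolute constant C > 0 such that for every 0 < η < 1, ∫₀¹ log(1 + η/|cos(πx)|) dx ≤ C·η^{1/2}. -/
open MeasureTheory Real intervalIntegral

lemma log_one_add_le_two_sqrt {a : ℝ} (ha : 0 ≤ a) :
    Real.log (1 + a) ≤ 2 * Real.sqrt a := by
  have hs := Real.sqrt_nonneg a
  have hsq := Real.sq_sqrt ha
  have h1 : (1 : ℝ) + a ≤ (1 + Real.sqrt a) ^ 2 := by nlinarith
  calc Real.log (1 + a) ≤ Real.log ((1 + Real.sqrt a) ^ 2) :=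
        Real.log_le_log (by linarith) h1
    _ = 2 * Real.log (1 + Real.sqrt a) := by
        rw [Real.log_pow]; push_cast; ring
    _ ≤ 2 * Real.sqrt a := by
        have := Real.log_le_sub_one_of_pos (show (0:ℝ) < 1 + Real.sqrt a by positivity)
        linarith

lemma abs_sub_le_abs_cos {x : ℝ} (hx : x ∈ Set.Icc (0:ℝ) 1) :
    |x - 1/2| ≤ |Real.cos (Real.pi * x)| := by
  obtain ⟨h0, h1⟩ := hx
  have hpi := Real.pi_pos
  have hc : Real.cos (Real.pi * x) = Real.sin (Real.pi * (1/2 - x)) := by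
    have : Real.pi * (1/2 - x) = Real.pi/2 - Real.pi * x := by ring
    rw [this, Real.sin_pi_div_two_sub]
  set s : ℝ := |1/2 - x| with hs
  have hs0 : 0 ≤ s := abs_nonneg _
  have hs2 : s ≤ 1/2 := by rw [hs, abs_le]; constructor <;> linarith
  have hsin : |Real.sin (Real.pi * (1/2 - x))| = Real.sin (Real.pi * s) := by
    rcases le_or_gt 0 (1/2 - x) with h | h
    · rw [hs, abs_of_nonneg h, abs_of_nonneg]
      exact Real.sin_nonneg_of_nonneg_of_le_pi (by positivity) (by nlinarith)
    · rw [hs, abs_of_neg h]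
      rw [show Real.pi * (1/2 - x) = -(Real.pi * -(1/2-x)) by ring, Real.sin_neg, abs_neg,
        abs_of_nonneg]
      exact Real.sin_nonneg_of_nonneg_of_le_pi (by nlinarith) (by nlinarith)
  have hjordan : 2 / Real.pi * (Real.pi * s) ≤ Real.sin (Real.pi * s) :=
    Real.mul_le_sin (by positivity) (by nlinarith)
  have h2s : 2 * s ≤ Real.sin (Real.pi * s) := by
    have : 2 / Real.pi * (Real.pi * s) = 2 * s := by field_simp
    linarith [this ▸ hjordan]
  have habs : |x - 1/2| = s := by rw [hs, abs_sub_comm]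
  rw [habs, hc, hsin]
  linarith

lemma pointwise_bound {η x : ℝ} (hη : 0 < η) (hx : x ∈ Set.Icc (0:ℝ) 1) :
    Real.log (1 + η / |Real.cos (Real.pi * x)|)
      ≤ 2 * Real.sqrt η * |x - 1/2| ^ (-(1/2) : ℝ) := by
  rcases eq_or_ne x (1/2) with h | h
  · subst h
    rw [show Real.pi * (1/2 : ℝ) = Real.pi / 2 by ring, Real.cos_pi_div_two]
    norm_num
  · have ht : 0 < |x - 1/2| := abs_pos.mpr (sub_ne_zero.mpr h)
    have hc : |x - 1/2| ≤ |Real.cos (Real.pi * x)| := abs_sub_le_abs_cos hx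
    have hc0 : 0 < |Real.cos (Real.pi * x)| := lt_of_lt_of_le ht hc
    set c := |Real.cos (Real.pi * x)|
    calc Real.log (1 + η / c) ≤ 2 * Real.sqrt (η / c) :=
          log_one_add_le_two_sqrt (by positivity)
      _ = 2 * Real.sqrt η * c ^ (-(1/2) : ℝ) := by
          rw [Real.sqrt_div hη.le, Real.rpow_neg hc0.le, ← Real.sqrt_eq_rpow,
            div_eq_mul_inv]
          ring
      _ ≤ 2 * Real.sqrt η * |x - 1/2| ^ (-(1/2) : ℝ) := by
          have := Real.rpow_le_rpow_of_nonpos ht hc (by norm_num : -(1/2:ℝ) ≤ 0)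
          have h2 : 0 ≤ 2 * Real.sqrt η := by positivity
          exact mul_le_mul_of_nonneg_left this h2

lemma intervalIntegrable_half_right :
    IntervalIntegrable (fun x : ℝ => |x - 1/2| ^ (-(1/2):ℝ)) volume (1/2) 1 := by
  have h : IntervalIntegrable (fun x : ℝ => (x - 1/2) ^ (-(1/2):ℝ)) volume (1/2) 1 := by
    have := (intervalIntegrable_rpow' (show (-1:ℝ) < -(1/2) by norm_num)
      (a := 0) (b := 1/2)).comp_sub_right (1/2)
    norm_num at this
    exact this
  apply h.congr
  intro x hx
  rw [Set.uIoc_of_le (by norm_num : (1/2:ℝ) ≤ 1)] at hx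
  dsimp only
  rw [abs_of_nonneg (by linarith [hx.1] : (0:ℝ) ≤ x - 1/2)]

lemma intervalIntegrable_half_left :
    IntervalIntegrable (fun x : ℝ => |x - 1/2| ^ (-(1/2):ℝ)) volume 0 (1/2) := by
  have h : IntervalIntegrable (fun x : ℝ => (1/2 - x) ^ (-(1/2):ℝ)) volume 0 (1/2) := by
    have := ((intervalIntegrable_rpow' (show (-1:ℝ) < -(1/2) by norm_num)
      (a := 0) (b := 1/2)).comp_sub_left (1/2)).symm
    norm_num at this
    exact this
  apply h.congr
  intro x hx
  rw [Set.uIoc_of_le (by norm_num : (0:ℝ) ≤ 1/2)] at hx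
  dsimp only
  rw [abs_of_nonpos (by linarith [hx.2] : x - 1/2 ≤ 0)]
  ring_nf

lemma base_integral :
    ∫ x in (0:ℝ)..(1/2), (x:ℝ) ^ (-(1/2):ℝ) = 2 * (Real.sqrt 2)⁻¹ := by
  rw [integral_rpow (Or.inl (by norm_num))]
  rw [Real.zero_rpow (by norm_num)]
  rw [show (-(1/2:ℝ) + 1) = 1/2 from by norm_num]
  rw [show ((1:ℝ)/2) ^ ((1:ℝ)/2 : ℝ) = Real.sqrt (1/2) from (Real.sqrt_eq_rpow _).symm]
  rw [one_div, Real.sqrt_inv]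
  ring

lemma J_val :
    ∫ x in (0:ℝ)..1, |x - 1/2| ^ (-(1/2):ℝ) = 4 * (Real.sqrt 2)⁻¹ := by
  rw [← integral_add_adjacent_intervals intervalIntegrable_half_left
    intervalIntegrable_half_right]
  have h1 : ∫ x in (0:ℝ)..(1/2), |x - 1/2| ^ (-(1/2):ℝ) = 2 * (Real.sqrt 2)⁻¹ := by
    rw [integral_congr (g := fun x : ℝ => (1/2 - x) ^ (-(1/2):ℝ))]
    · have := integral_comp_sub_left (fun u : ℝ => u ^ (-(1/2):ℝ)) (1/2)
        (a := 0) (b := 1/2)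
      norm_num at this ⊢
      rw [this]
      simpa using base_integral
    · intro x hx
      rw [Set.uIcc_of_le (by norm_num : (0:ℝ) ≤ 1/2)] at hx
      show |x - 1/2| ^ (-(1/2:ℝ)) = (1/2 - x) ^ (-(1/2:ℝ))
      rw [abs_of_nonpos (by linarith [hx.2] : x - 1/2 ≤ 0)]
      ring_nf
  have h2 : ∫ x in (1/2:ℝ)..1, |x - 1/2| ^ (-(1/2):ℝ) = 2 * (Real.sqrt 2)⁻¹ := by
    rw [integral_congr (g := fun x : ℝ => (x - 1/2) ^ (-(1/2):ℝ))]
    · have := integral_comp_sub_right (fun u : ℝ => u ^ (-(1/2):ℝ)) (1/2)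
        (a := 1/2) (b := 1)
      norm_num at this ⊢
      rw [this]
      simpa using base_integral
    · intro x hx
      rw [Set.uIcc_of_le (by norm_num : (1/2:ℝ) ≤ 1)] at hx
      show |x - 1/2| ^ (-(1/2:ℝ)) = (x - 1/2) ^ (-(1/2:ℝ))
      rw [abs_of_nonneg (by linarith [hx.1] : (0:ℝ) ≤ x - 1/2)]
  rw [h1, h2]
  ring

/-- `∫₀¹ log(1 + η/|cos(πx)|) dx ≤ C·√η` for an absolute constant `C`. -/
theorem integral_log_one_add_div_abs_cos :
    ∃ C : ℝ, 0 < C ∧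
      ∀ η : ℝ, 0 < η → η < 1 →
        (∫ x in (0:ℝ)..1, Real.log (1 + η / |Real.cos (Real.pi * x)|))
          ≤ C * Real.sqrt η := by
  refine ⟨6, by norm_num, fun η hη _ => ?_⟩
  have hηs : 0 ≤ Real.sqrt η := Real.sqrt_nonneg η
  have hg_int : IntervalIntegrable
      (fun x : ℝ => 2 * Real.sqrt η * |x - 1/2| ^ (-(1/2):ℝ)) volume 0 1 :=
    (intervalIntegrable_half_left.trans intervalIntegrable_half_right).const_mul _
  have hf_meas : AEStronglyMeasurable
      (fun x : ℝ => Real.log (1 + η / |Real.cos (Real.pi * x)|))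
      (volume.restrict (Set.uIoc (0:ℝ) 1)) := by
    apply Measurable.aestronglyMeasurable
    exact Real.measurable_log.comp (by fun_prop)
  have hf_int : IntervalIntegrable
      (fun x : ℝ => Real.log (1 + η / |Real.cos (Real.pi * x)|)) volume 0 1 := by
    apply hg_int.mono_fun' hf_meas
    filter_upwards [ae_restrict_mem measurableSet_uIoc] with x hx
    rw [Set.uIoc_of_le (by norm_num : (0:ℝ) ≤ 1)] at hx
    have hnn : 0 ≤ Real.log (1 + η / |Real.cos (Real.pi * x)|) :=
      Real.log_nonneg (by
        have : 0 ≤ η / |Real.cos (Real.pi * x)| := div_nonneg hη.le (abs_nonneg _)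
        linarith)
    rw [Real.norm_eq_abs, abs_of_nonneg hnn]
    exact pointwise_bound hη ⟨hx.1.le, hx.2⟩
  calc (∫ x in (0:ℝ)..1, Real.log (1 + η / |Real.cos (Real.pi * x)|))
      ≤ ∫ x in (0:ℝ)..1, 2 * Real.sqrt η * |x - 1/2| ^ (-(1/2):ℝ) :=
        integral_mono_on (by norm_num) hf_int hg_int
          (fun x hx => pointwise_bound hη hx)
    _ = 2 * Real.sqrt η * (4 * (Real.sqrt 2)⁻¹) := by
        rw [intervalIntegral.integral_const_mul, J_val]
    _ ≤ 6 * Real.sqrt η := by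
        have h2 : Real.sqrt 2 * Real.sqrt 2 = 2 := Real.mul_self_sqrt (by norm_num)
        have hpos : 0 < Real.sqrt 2 := Real.sqrt_pos.mpr (by norm_num)
        have hs32 : Real.sqrt 2 ≤ 3/2 := by nlinarith
        have hi : (Real.sqrt 2)⁻¹ = Real.sqrt 2 / 2 := by
          field_simp
          rw [Real.sq_sqrt (by norm_num)]
        rw [hi]
        nlinarith [mul_le_mul_of_nonneg_right hs32 hηs]
end

section
/- Let x, ω, E ∈ ℝ, ε > 0, let φ̂ : ℤ → ℂ, let N be a positive integer, and suppose cos(π(x+jω)) ≠ 0 for all j ∈ {0,…,N−1}. Then det(H_{[0,N)}(x) − E) = (∏_{j=0}^{N−1} cos(π(x+jω)))^{−1}·det B_N(x). -/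
/-- The finite-volume long-range Maryland operator on `[0,N) ∩ ℤ`:
`H(x)(n,n') = tan(π(x+nω))·δ_{nn'} + ε·φ̂(n-n')`. -/
noncomputable def HN (x ω ε : ℝ) (φh : ℤ → ℂ) (N : ℕ) : Matrix (Fin N) (Fin N) ℂ :=
  fun n n' => (if n = n' then (Real.tan (Real.pi * (x + n * ω)) : ℂ) else 0)
    + (ε : ℂ) * φh ((n : ℤ) - (n' : ℤ))

/-- The cosine-regularized matrix `B_N(x)`. -/
noncomputable def BN (ω E ε : ℝ) (φh : ℤ → ℂ) (N : ℕ) (x : ℝ) :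
    Matrix (Fin N) (Fin N) ℂ :=
  fun n n' =>
    if n = n' then
      (Real.sin (Real.pi * (x + n * ω)) : ℂ)
        + ((ε : ℂ) * φh 0 - (E : ℂ)) * (Real.cos (Real.pi * (x + n * ω)) : ℂ)
    else (ε : ℂ) * φh ((n : ℤ) - (n' : ℤ)) * (Real.cos (Real.pi * (x + n * ω)) : ℂ)

/-- Factorization of the determinant:
`det(H_{[0,N)}(x) - E) = (∏_j cos(π(x+jω)))⁻¹ · det B_N(x)`. -/
theorem det_factorization
    (x ω E ε : ℝ) (φh : ℤ → ℂ) (N : ℕ) (hN : 0 < N)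
    (hcos : ∀ j : ℕ, j < N → Real.cos (Real.pi * (x + j * ω)) ≠ 0) :
    (HN x ω ε φh N - (E : ℂ) • 1).det
      = (∏ j ∈ Finset.range N, (Real.cos (Real.pi * (x + j * ω)) : ℂ))⁻¹
          * (BN ω E ε φh N x).det := by
  have key : BN ω E ε φh N x
      = Matrix.diagonal (fun n : Fin N => (Real.cos (Real.pi * (x + n * ω)) : ℂ))
        * (HN x ω ε φh N - (E : ℂ) • 1) := by
    ext n n'
    rw [Matrix.diagonal_mul]
    by_cases h : n = n'
    · subst h
      have hc : (Real.cos (Real.pi * (x + n * ω)) : ℂ) ≠ 0 := by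
        exact_mod_cast Complex.ofReal_ne_zero.mpr (hcos n n.isLt)
      have hc2 : Complex.cos ((Real.pi : ℂ) * ((x : ℂ) + ((n : ℕ) : ℂ) * (ω : ℂ))) ≠ 0 := by
        rw [Complex.ofReal_cos] at hc
        push_cast at hc ⊢
        exact hc
      have ht : (Real.tan (Real.pi * (x + n * ω)) : ℂ)
          = (Real.sin (Real.pi * (x + n * ω)) : ℂ) / (Real.cos (Real.pi * (x + n * ω)) : ℂ) := by
        push_cast [Real.tan_eq_sin_div_cos]; ring
      simp only [BN, HN, Matrix.sub_apply, Matrix.smul_apply, Matrix.one_apply_eq,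
        if_pos rfl, ht, smul_eq_mul, eq_self_iff_true, ite_true]
      field_simp [hc2]
      ring
    · simp only [BN, HN, Matrix.sub_apply, Matrix.smul_apply, Matrix.one_apply_ne h,
        if_neg h, smul_eq_mul]
      ring
  have hprod : (∏ j ∈ Finset.range N, (Real.cos (Real.pi * (x + j * ω)) : ℂ))
      = ∏ n : Fin N, (Real.cos (Real.pi * (x + n * ω)) : ℂ) := by
    rw [Fin.prod_univ_eq_prod_range (fun j : ℕ => (Real.cos (Real.pi * (x + j * ω)) : ℂ))]
  have hne : (∏ j ∈ Finset.range N, (Real.cos (Real.pi * (x + j * ω)) : ℂ)) ≠ 0 := by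
    rw [Finset.prod_ne_zero_iff]
    intro j hj
    exact_mod_cast hcos j (Finset.mem_range.mp hj)
  rw [key, Matrix.det_mul, Matrix.det_diagonal, ← hprod, inv_mul_cancel_left₀ hne]
end

section
/- Let x, ω, E ∈ ℝ, ε > 0, let φ̂ : ℤ → ℂ, let N be a positive integer, and suppose cos(π(x+jω)) ≠ 0 for all j ∈ {0,…,N−1} and det B_N(x) ≠ 0. Then the matrix H_{[0,N)}(x) − E is invertible, and its inverse G = G_{[0,N)}(x,E) satisfies |G(n,n')| = |cos(π(x+n'ω))|·|det B_{n',n}(x)| / |det B_N(x)| for all n, n' ∈ {0,…,N−1}, where B_{n',n}(x) is the (N−1)×(N−1) minor of B_N(x) obtained by deleting row n' and column n. -/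
/-- Cramer's rule for the Green's function of the long-range Maryland model:
`|G(n,n')| = |cos(π(x+n'ω))|·|det B_{n',n}(x)| / |det B_N(x)|` (the matrix size is
written as `N + 1` so that the minor deleting row `n'` and column `n` is an honest
`N × N` matrix). -/
theorem greens_function_cramer
    (x ω E ε : ℝ) (φh : ℤ → ℂ) (N : ℕ)
    (hcos : ∀ j : ℕ, j < N + 1 → Real.cos (Real.pi * (x + j * ω)) ≠ 0)
    (hdet : (BN ω E ε φh (N + 1) x).det ≠ 0) :
    IsUnit (HN x ω ε φh (N + 1) - (E : ℂ) • 1).det ∧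
    ∀ n n' : Fin (N + 1),
      ‖((HN x ω ε φh (N + 1) - (E : ℂ) • 1)⁻¹) n n'‖
        = |Real.cos (Real.pi * (x + n' * ω))|
            * ‖((BN ω E ε φh (N + 1) x).submatrix n'.succAbove n.succAbove).det‖
            / ‖(BN ω E ε φh (N + 1) x).det‖ := by
  set M := HN x ω ε φh (N + 1) - (E : ℂ) • 1 with hM
  set B := BN ω E ε φh (N + 1) x with hB
  set D : Matrix (Fin (N+1)) (Fin (N+1)) ℂ :=
    Matrix.diagonal (fun n : Fin (N+1) => (Real.cos (Real.pi * (x + n * ω)) : ℂ)) with hD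
  have hcos' : ∀ n : Fin (N+1), (Real.cos (Real.pi * (x + n * ω)) : ℂ) ≠ 0 := fun n =>
    Complex.ofReal_ne_zero.mpr (hcos n n.isLt)
  have hDM : B = D * M := by
    ext n n'
    rw [hD, Matrix.diagonal_mul]
    simp only [hB, hM, BN, HN, Matrix.sub_apply, Matrix.smul_apply, Matrix.one_apply]
    by_cases h : n = n'
    · subst h
      have hc := hcos' n
      simp only [if_pos rfl]
      rw [Real.tan_eq_sin_div_cos]
      push_cast at hc ⊢
      field_simp
      ring
    · simp [h]
      ring
  have hDne : D.det ≠ 0 := by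
    rw [hD, Matrix.det_diagonal]
    exact Finset.prod_ne_zero_iff.mpr fun n _ => hcos' n
  have hdetM : M.det ≠ 0 := fun h => hdet (by rw [hDM, Matrix.det_mul, h, mul_zero])
  refine ⟨isUnit_iff_ne_zero.mpr hdetM, fun n n' => ?_⟩
  have hUD : IsUnit D.det := isUnit_iff_ne_zero.mpr hDne
  have hMinv : M⁻¹ = B⁻¹ * D := by
    have h1 : M = D⁻¹ * B := by
      rw [hDM, ← Matrix.mul_assoc, Matrix.nonsing_inv_mul D hUD, Matrix.one_mul]
    rw [h1, Matrix.mul_inv_rev, Matrix.nonsing_inv_nonsing_inv D hUD]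
  have hBinv : B⁻¹ n n' = B.det⁻¹ * ((-1 : ℂ) ^ ((n' : ℕ) + (n : ℕ))
      * (B.submatrix n'.succAbove n.succAbove).det) := by
    rw [Matrix.inv_def, Ring.inverse_eq_inv', Matrix.smul_apply,
      Matrix.adjugate_fin_succ_eq_det_submatrix, smul_eq_mul]
  rw [hMinv, hD, Matrix.mul_diagonal, hBinv]
  rw [norm_mul, norm_mul, norm_mul, norm_inv, norm_pow, norm_neg, norm_one, one_pow, one_mul,
    Complex.norm_real, Real.norm_eq_abs, div_eq_mul_inv]
  ring
end

section
/- Let ρ > 0, 0 < c₀ ≤ ρ/2, 0 < ε < 1, 0 < ε₀ < 1 with ε₀^{1/40} < 1/400, C₁ ≥ 1 and C̄ > 0. Let φ̂ : ℤ → ℂ satisfy |φ̂(n)| < e^{−ρ|n|} for all n, let x₀, ω ∈ ℝ with x₀ + nω − 1/2 ∉ ℤ for all n ∈ ℤ, let E ∈ ℝ, and let ξ : ℤ → ℂ satisfy |ξ_n| ≤ C̄·(1+|n|) for all n and the eigenvalue equation tan(π(x₀+nω))·ξ_n + ε·∑_{k∈ℤ} φ̂(n−k)·ξ_k = E·ξ_n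 for all n ∈ ℤ. Let N be sufficiently large (depending on ρ, c₀, ε₀, C₁, C̄), let j, m ∈ ℤ with |j| ≤ N^{C₁} and |m| < √N, and set Λ = [j+m−N, j+m+N] ∩ ℤ. If H_Λ(x₀) − E is invertible and |G_Λ(x₀,E)(n₁,n₂)| < e^{−c₀(|n₁−n₂| − ε₀^{1/40}·N)} for all n₁, n₂ ∈ Λ, then |ξ_j| < e^{−c₀·N/3}. -/
lemma base_summable {a : ℝ} (ha : 0 < a) :
    Summable (fun k : ℤ => Real.exp (-a * |(k:ℝ)|) * (1 + |(k:ℝ)|)) := by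
  have hr1 : ‖Real.exp (-a)‖ < 1 := by
    rw [Real.norm_eq_abs, abs_of_pos (Real.exp_pos _)]
    exact Real.exp_lt_one_iff.mpr (by linarith)
  have h1 : Summable (fun n : ℕ => Real.exp (-a) ^ n) :=
    summable_geometric_of_norm_lt_one hr1
  have h2 : Summable (fun n : ℕ => (n:ℝ) * Real.exp (-a) ^ n) := by
    simpa using summable_pow_mul_geometric_of_norm_lt_one 1 hr1
  have hnat : Summable (fun n : ℕ => Real.exp (-a * n) * (1 + (n:ℝ))) := by
    refine (h1.add h2).congr fun n => ?_
    rw [show -a * (n:ℝ) = (n:ℝ) * (-a) by ring, Real.exp_nat_mul]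
    ring
  refine Summable.of_nat_of_neg (hnat.congr fun n => ?_) (hnat.congr fun n => ?_)
  · push_cast
    rw [abs_of_nonneg (by positivity : (0:ℝ) ≤ (n:ℝ))]
  · push_cast
    rw [abs_neg, abs_of_nonneg (by positivity : (0:ℝ) ≤ (n:ℝ))]

lemma shifted_summable {a : ℝ} (ha : 0 < a) (c : ℤ) :
    Summable (fun k : ℤ => Real.exp (-a * |(c:ℝ) - k|) * (1 + |(c:ℝ) - k|)) := by
  have h := (base_summable ha).comp_injective (Equiv.subLeft c).injective
  refine h.congr fun k => ?_
  simp only [Function.comp, Equiv.subLeft_apply]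
  push_cast
  ring_nf

lemma shifted_tsum_eq {a : ℝ} (c : ℤ) :
    ∑' k : ℤ, Real.exp (-a * |(c:ℝ) - k|) * (1 + |(c:ℝ) - k|)
      = ∑' k : ℤ, Real.exp (-a * |(k:ℝ)|) * (1 + |(k:ℝ)|) := by
  rw [← Equiv.tsum_eq (Equiv.subLeft c)
    (fun k : ℤ => Real.exp (-a * |(k:ℝ)|) * (1 + |(k:ℝ)|))]
  refine tsum_congr fun k => ?_
  simp only [Equiv.subLeft_apply]
  push_cast
  ring_nf

lemma eventually_bound (c₀ C₁ K : ℝ) (hc₀ : 0 < c₀) :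
    ∃ N₀ : ℕ, ∀ N : ℕ, N₀ ≤ N →
      16 ≤ N ∧ 12 * (|K| + 1) * ((N:ℝ) ^ (1 + C₁) * Real.exp (-(c₀/6) * N)) < 1 := by
  have ht : Filter.Tendsto
      (fun x : ℝ => 12 * (|K| + 1) * (x ^ (1 + C₁) * Real.exp (-(c₀/6) * x)))
      Filter.atTop (nhds 0) := by
    simpa using (tendsto_rpow_mul_exp_neg_mul_atTop_nhds_zero (1 + C₁) (c₀/6)
      (by positivity)).const_mul (12 * (|K| + 1))
  have hev : ∀ᶠ x : ℝ in Filter.atTop,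
      12 * (|K| + 1) * (x ^ (1 + C₁) * Real.exp (-(c₀/6) * x)) < 1 :=
    ht.eventually_lt_const one_pos
  have hev2 := (tendsto_natCast_atTop_atTop (R := ℝ)).eventually hev
  have hev3 := hev2.and (Filter.eventually_ge_atTop 16)
  obtain ⟨N₀, hN₀⟩ := Filter.eventually_atTop.mp hev3
  exact ⟨N₀, fun N hN => ⟨(hN₀ N hN).2, (hN₀ N hN).1⟩⟩

set_option maxHeartbeats 1600000 in
/-- If a generalized eigenfunction is polynomially bounded and the Green's function
on the window `Λ = [j+m-N, j+m+N]` decays exponentially, then `|ξ_j| < e^{-c₀N/3}`. -/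
theorem eigenfunction_decay_from_greens_function
    (ρ c₀ ε ε₀ C₁ Cbar : ℝ) (hρ : 0 < ρ) (hc₀ : 0 < c₀) (hc₀ρ : c₀ ≤ ρ / 2)
    (hε : 0 < ε) (hε1 : ε < 1) (hε₀ : 0 < ε₀) (hε₀1 : ε₀ < 1)
    (hε₀small : ε₀ ^ ((1:ℝ)/40) < 1/400) (hC₁ : 1 ≤ C₁) (hCbar : 0 < Cbar) :
    ∃ N₀ : ℕ, ∀ N : ℕ, N₀ ≤ N →
      ∀ φh : ℤ → ℂ, (∀ n : ℤ, ‖φh n‖ < Real.exp (-ρ * |(n : ℝ)|)) →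
      ∀ x₀ ω : ℝ, (∀ n m : ℤ, x₀ + n * ω - 1/2 ≠ (m : ℝ)) →
      ∀ E : ℝ, ∀ ξ : ℤ → ℂ,
        (∀ n : ℤ, ‖ξ n‖ ≤ Cbar * (1 + |(n : ℝ)|)) →
        (∀ n : ℤ, (Real.tan (Real.pi * (x₀ + n * ω)) : ℂ) * ξ n
            + (ε : ℂ) * ∑' k : ℤ, φh (n - k) * ξ k = (E : ℂ) * ξ n) →
      ∀ j m : ℤ, (|j| : ℝ) ≤ (N : ℝ) ^ C₁ → (|m| : ℝ) < Real.sqrt N →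
        IsUnit (Hmat x₀ ω ε φh (Finset.Icc (j + m - N) (j + m + N)) - (E : ℂ) • 1).det →
        (∀ n₁ n₂ : Finset.Icc (j + m - N) (j + m + N),
          ‖((Hmat x₀ ω ε φh (Finset.Icc (j + m - N) (j + m + N)) - (E : ℂ) • 1)⁻¹) n₁ n₂‖
            < Real.exp (-c₀ * (|((n₁ : ℤ) : ℝ) - ((n₂ : ℤ) : ℝ)|
                - ε₀ ^ ((1:ℝ)/40) * N))) →
        ‖ξ j‖ < Real.exp (-c₀ * N / 3) := by
  have hρ2 : 0 < ρ / 2 := by linarith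
  set S : ℝ := ∑' k : ℤ, Real.exp (-(ρ/2) * |(k:ℝ)|) * (1 + |(k:ℝ)|) with hSdef
  have hS0 : 0 ≤ S := tsum_nonneg fun k => by positivity
  obtain ⟨N₀, hN₀⟩ := eventually_bound c₀ C₁ (Cbar * S) hc₀
  refine ⟨N₀, fun N hNN₀ φh hφ x₀ ω hirr E ξ hξ heigen j m hj hm hdet hG => ?_⟩
  obtain ⟨h16, hP⟩ := hN₀ N hNN₀
  set δ : ℝ := ε₀ ^ ((1:ℝ)/40) with hδdef
  have hδ0 : 0 ≤ δ := Real.rpow_nonneg hε₀.le _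
  set x : ℝ := (N:ℝ) with hxdef
  have hx16 : (16:ℝ) ≤ x := by rw [hxdef]; exact_mod_cast h16
  have hx0 : 0 < x := by linarith
  have hx1 : 1 ≤ x := by linarith
  have hsqrt : Real.sqrt x ≤ x / 4 := by
    nlinarith [Real.sq_sqrt hx0.le, Real.sqrt_nonneg x, sq_nonneg (Real.sqrt x - 4)]
  have hsq0 : 0 ≤ Real.sqrt x := Real.sqrt_nonneg x
  have hxC : x ≤ x ^ C₁ := by
    have := Real.rpow_le_rpow_of_exponent_le hx1 hC₁
    rwa [Real.rpow_one] at this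
  -- basic membership facts
  have hmR : |(m:ℝ)| < Real.sqrt x := by
    have : ((|m| : ℤ) : ℝ) < Real.sqrt x := by exact_mod_cast hm
    rwa [Int.cast_abs] at this
  have hjR : |(j:ℝ)| ≤ x ^ C₁ := by
    have : ((|j| : ℤ) : ℝ) ≤ x ^ C₁ := by exact_mod_cast hj
    rwa [Int.cast_abs] at this
  have hmZ : |m| ≤ (N:ℤ) := by
    have : |(m:ℝ)| ≤ (N:ℝ) := by linarith
    exact_mod_cast this
  obtain ⟨hm1, hm2⟩ := abs_le.mp hmZ
  set Λ : Finset ℤ := Finset.Icc (j + m - N) (j + m + N) with hΛ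
  have hjmem : j ∈ Λ := Finset.mem_Icc.mpr ⟨by omega, by omega⟩
  set A : Matrix Λ Λ ℂ := Hmat x₀ ω ε φh Λ - (E:ℂ) • 1 with hAdef
  -- summability facts
  have hbound : ∀ n k : ℤ, ‖φh (n - k) * ξ k‖
      ≤ Real.exp (-ρ * |(n:ℝ) - k|) * (Cbar * (1 + |(k:ℝ)|)) := by
    intro n k
    rw [norm_mul]
    have h1 : ‖φh (n - k)‖ ≤ Real.exp (-ρ * |(n:ℝ) - k|) := by
      have h2 := (hφ (n - k)).le
      rwa [show |((n - k : ℤ) : ℝ)| = |(n:ℝ) - k| by push_cast; ring_nf] at h2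
    exact mul_le_mul h1 (hξ k) (norm_nonneg _) (Real.exp_pos _).le
  have hmaj : ∀ n : ℤ, Summable (fun k : ℤ =>
      Real.exp (-ρ * |(n:ℝ) - k|) * (Cbar * (1 + |(k:ℝ)|))) := by
    intro n
    have hs := (shifted_summable hρ n).mul_left (Cbar * (1 + |(n:ℝ)|))
    refine Summable.of_nonneg_of_le (fun k => by positivity) (fun k => ?_) hs
    have habs : |(k:ℝ)| ≤ |(n:ℝ)| + |(n:ℝ) - k| := by
      have h := abs_add_le ((n:ℝ)) (-((n:ℝ) - k))
      rw [abs_neg] at h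
      calc |(k:ℝ)| = |(n:ℝ) + -((n:ℝ) - k)| := by ring_nf
        _ ≤ |(n:ℝ)| + |(n:ℝ) - k| := h
    have hkey : 1 + |(k:ℝ)| ≤ (1 + |(n:ℝ)|) * (1 + |(n:ℝ) - k|) := by
      nlinarith [abs_nonneg ((n:ℝ)), abs_nonneg ((n:ℝ) - k)]
    calc Real.exp (-ρ * |(n:ℝ) - k|) * (Cbar * (1 + |(k:ℝ)|))
        ≤ Real.exp (-ρ * |(n:ℝ) - k|) * (Cbar * ((1 + |(n:ℝ)|) * (1 + |(n:ℝ) - k|))) := by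
          exact mul_le_mul_of_nonneg_left
            (mul_le_mul_of_nonneg_left hkey hCbar.le) (Real.exp_pos _).le
      _ = Cbar * (1 + |(n:ℝ)|) * (Real.exp (-ρ * |(n:ℝ) - k|) * (1 + |(n:ℝ) - k|)) := by ring
  have hsumN : ∀ n : ℤ, Summable (fun k : ℤ => ‖φh (n - k) * ξ k‖) := fun n =>
    Summable.of_nonneg_of_le (fun k => norm_nonneg _) (hbound n) (hmaj n)
  have hsumC : ∀ n : ℤ, Summable (fun k : ℤ => φh (n - k) * ξ k) := fun n =>
    (hsumN n).of_norm
  -- the vector and the boundary term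
  set v : Λ → ℂ := fun n => ξ (n:ℤ) with hvdef
  set bfun : Λ → ℂ :=
    fun n => -(ε:ℂ) * ∑' k : ↑((Λ : Set ℤ)ᶜ), φh ((n:ℤ) - (k:ℤ)) * ξ (k:ℤ) with hbdef
  have hAv : A.mulVec v = bfun := by
    funext n
    have hsplit := (hsumC (n:ℤ)).sum_add_tsum_compl (s := Λ)
    have heq := heigen (n:ℤ)
    set t : ℂ := (Real.tan (Real.pi * (x₀ + (n:ℤ) * ω)) : ℂ) with htdef
    have hterm : ∀ n' : Λ, A n n' * v n' =
        (if ((n:ℤ) : ℤ) = (n':ℤ) then (t - (E:ℂ)) * ξ (n':ℤ) else 0)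
          + (ε:ℂ) * (φh ((n:ℤ) - (n':ℤ)) * ξ (n':ℤ)) := by
      intro n'
      have hA_entry : A n n' = (if (n:ℤ) = (n':ℤ) then t - (E:ℂ) else 0)
          + (ε:ℂ) * φh ((n:ℤ) - (n':ℤ)) := by
        simp only [hAdef, Matrix.sub_apply, Matrix.smul_apply, Hmat, smul_eq_mul]
        by_cases h : (n:ℤ) = (n':ℤ)
        · have hnn : n = n' := Subtype.ext h
          subst hnn
          rw [if_pos rfl, if_pos rfl, Matrix.one_apply_eq, htdef]
          ring
        · have hnn : n ≠ n' := fun hc => h (congrArg _ hc)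
          rw [if_neg h, if_neg h, Matrix.one_apply_ne hnn]
          ring
      rw [hA_entry, hvdef]
      by_cases h : (n:ℤ) = (n':ℤ)
      · rw [if_pos h, if_pos h]; ring
      · rw [if_neg h, if_neg h]; ring
    have hmv : A.mulVec v n = ∑ n' : Λ, A n n' * v n' := by
      simp [Matrix.mulVec, dotProduct]
    rw [hmv, Finset.sum_congr rfl (fun n' _ => hterm n'), Finset.sum_add_distrib,
      ← Finset.mul_sum]
    have hd : (∑ n' : Λ, if ((n:ℤ) : ℤ) = (n':ℤ) then (t - (E:ℂ)) * ξ (n':ℤ) else 0)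
        = (t - (E:ℂ)) * ξ (n:ℤ) := by
      rw [Finset.sum_coe_sort Λ (fun k => if (n:ℤ) = k then (t - (E:ℂ)) * ξ k else 0)]
      rw [Finset.sum_ite_eq Λ ((n:ℤ)) (fun k => (t - (E:ℂ)) * ξ k)]
      simp [n.2]
    have hs2 : (∑ n' : Λ, φh ((n:ℤ) - (n':ℤ)) * ξ (n':ℤ))
        = ∑ k ∈ Λ, φh ((n:ℤ) - k) * ξ k :=
      Finset.sum_coe_sort Λ (fun k => φh ((n:ℤ) - k) * ξ k)
    rw [hd, hs2]
    have h1 : (t - (E:ℂ)) * ξ (n:ℤ) = -(ε:ℂ) * ∑' k : ℤ, φh ((n:ℤ) - k) * ξ k := by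
      linear_combination heq
    rw [h1, ← hsplit, hbdef]
    ring
  have hvinv : v = A⁻¹.mulVec bfun := by
    rw [← hAv, Matrix.mulVec_mulVec, Matrix.nonsing_inv_mul A hdet, Matrix.one_mulVec]
  set j' : Λ := ⟨j, hjmem⟩ with hj'def
  have hxi : ξ j = ∑ n : Λ, A⁻¹ j' n * bfun n := by
    have := congrFun hvinv j'
    simp only [hvdef] at this
    rw [show ξ j = ξ ((j':Λ):ℤ) from rfl, this]
    simp [Matrix.mulVec, dotProduct]
  -- geometric facts
  have hnabs : ∀ n : Λ, |((n:ℤ):ℝ)| ≤ 3 * x ^ C₁ := by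
    intro n
    obtain ⟨ha, hb⟩ := Finset.mem_Icc.mp n.2
    have haR : (j:ℝ) + m - x ≤ ((n:ℤ):ℝ) := by rw [hxdef]; exact_mod_cast ha
    have hbR : ((n:ℤ):ℝ) ≤ (j:ℝ) + m + x := by rw [hxdef]; exact_mod_cast hb
    have h1 : |((n:ℤ):ℝ)| ≤ |(j:ℝ)| + |(m:ℝ)| + x :=
      abs_le.mpr ⟨by linarith [neg_abs_le (j:ℝ), neg_abs_le (m:ℝ)],
        by linarith [le_abs_self (j:ℝ), le_abs_self (m:ℝ)]⟩
    have h2 : |(m:ℝ)| ≤ x := by linarith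
    linarith
  have hjk : ∀ k : ℤ, k ∉ Λ → x - Real.sqrt x ≤ |(j:ℝ) - k| := by
    intro k hk
    rw [hΛ, Finset.mem_Icc, not_and_or, not_le, not_le] at hk
    have habs1 : x + 1 ≤ |(j:ℝ) + m - k| := by
      rcases hk with h | h
      · have h' : (N:ℤ) + 1 ≤ j + m - k := by omega
        have hR : x + 1 ≤ (j:ℝ) + m - k := by rw [hxdef]; exact_mod_cast h'
        exact hR.trans (le_abs_self _)
      · have h' : (N:ℤ) + 1 ≤ k - (j + m) := by omega
        have hR : x + 1 ≤ (k:ℝ) - ((j:ℝ) + m) := by rw [hxdef]; exact_mod_cast h'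
        calc x + 1 ≤ (k:ℝ) - ((j:ℝ) + m) := hR
          _ ≤ |(k:ℝ) - ((j:ℝ) + m)| := le_abs_self _
          _ = |(j:ℝ) + m - k| := by rw [abs_sub_comm]
    have htr : |(j:ℝ) + m - k| - |(m:ℝ)| ≤ |(j:ℝ) - k| := by
      have h := abs_sub_abs_le_abs_sub ((j:ℝ) + m - k) ((m:ℝ))
      rw [show (j:ℝ) + m - k - m = (j:ℝ) - k by ring] at h
      exact h
    linarith
  -- per-term bound
  set C2 : ℝ := Cbar * (1 + 3 * x ^ C₁) * Real.exp (-c₀ * (x - Real.sqrt x)) with hC2def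
  have hxC0 : (0:ℝ) ≤ x ^ C₁ := Real.rpow_nonneg hx0.le _
  have hC20 : 0 ≤ C2 := by positivity
  have hper : ∀ n : Λ, ‖A⁻¹ j' n * bfun n‖ ≤
      Cbar * ((1 + 3 * x ^ C₁) * S) * Real.exp (-c₀ * (x - δ * x - Real.sqrt x)) := by
    intro n
    have hGn : ‖A⁻¹ j' n‖ ≤ Real.exp (-c₀ * (|(j:ℝ) - ((n:ℤ):ℝ)| - δ * x)) := (hG j' n).le
    have hsub : Summable (fun k : ↑((Λ : Set ℤ)ᶜ) => ‖φh ((n:ℤ) - (k:ℤ)) * ξ (k:ℤ)‖) := by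
      have := (hsumN (n:ℤ)).subtype ((Λ : Set ℤ)ᶜ : Set ℤ)
      exact this
    have hb1 : ‖bfun n‖ ≤ ε * ∑' k : ↑((Λ : Set ℤ)ᶜ), ‖φh ((n:ℤ) - (k:ℤ)) * ξ (k:ℤ)‖ := by
      rw [hbdef]
      simp only []
      rw [norm_mul, norm_neg, Complex.norm_real, Real.norm_eq_abs, abs_of_pos hε]
      exact mul_le_mul_of_nonneg_left (norm_tsum_le_tsum_norm hsub) hε.le
    have hterm2 : ∀ k : ↑((Λ : Set ℤ)ᶜ),
        Real.exp (-c₀ * |(j:ℝ) - ((n:ℤ):ℝ)|) * ‖φh ((n:ℤ) - (k:ℤ)) * ξ (k:ℤ)‖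
        ≤ C2 * (Real.exp (-(ρ/2) * |((n:ℤ):ℝ) - ((k:ℤ):ℝ)|)
            * (1 + |((n:ℤ):ℝ) - ((k:ℤ):ℝ)|)) := by
      intro k
      have hkmem : (k:ℤ) ∉ Λ := k.2
      have hjkk := hjk (k:ℤ) hkmem
      have htri : |(j:ℝ) - ((k:ℤ):ℝ)| ≤ |(j:ℝ) - ((n:ℤ):ℝ)| + |((n:ℤ):ℝ) - ((k:ℤ):ℝ)| := by
        calc |(j:ℝ) - ((k:ℤ):ℝ)|
            = |((j:ℝ) - ((n:ℤ):ℝ)) + (((n:ℤ):ℝ) - ((k:ℤ):ℝ))| := by ring_nf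
          _ ≤ _ := abs_add_le _ _
      have hgeom : c₀ * (x - Real.sqrt x) + (ρ/2) * |((n:ℤ):ℝ) - ((k:ℤ):ℝ)|
          ≤ c₀ * |(j:ℝ) - ((n:ℤ):ℝ)| + ρ * |((n:ℤ):ℝ) - ((k:ℤ):ℝ)| := by
        have f1 := mul_le_mul_of_nonneg_left htri hc₀.le
        rw [mul_add] at f1
        have f2 := mul_le_mul_of_nonneg_left hjkk hc₀.le
        have f3 := mul_le_mul_of_nonneg_right hc₀ρ (abs_nonneg (((n:ℤ):ℝ) - ((k:ℤ):ℝ)))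
        linarith
      have he1 : Real.exp (-c₀ * |(j:ℝ) - ((n:ℤ):ℝ)|)
            * Real.exp (-ρ * |((n:ℤ):ℝ) - ((k:ℤ):ℝ)|)
          ≤ Real.exp (-c₀ * (x - Real.sqrt x))
            * Real.exp (-(ρ/2) * |((n:ℤ):ℝ) - ((k:ℤ):ℝ)|) := by
        rw [← Real.exp_add, ← Real.exp_add]
        exact Real.exp_le_exp.mpr (by linarith)
      have habs2 : |((k:ℤ):ℝ)| ≤ |((n:ℤ):ℝ)| + |((n:ℤ):ℝ) - ((k:ℤ):ℝ)| := by
        calc |((k:ℤ):ℝ)| = |((n:ℤ):ℝ) + -(((n:ℤ):ℝ) - ((k:ℤ):ℝ))| := by ring_nf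
          _ ≤ |((n:ℤ):ℝ)| + |-(((n:ℤ):ℝ) - ((k:ℤ):ℝ))| := abs_add_le _ _
          _ = _ := by rw [abs_neg]
      have hkb : 1 + |((k:ℤ):ℝ)| ≤ (1 + 3 * x ^ C₁) * (1 + |((n:ℤ):ℝ) - ((k:ℤ):ℝ)|) := by
        have h3 := hnabs n
        nlinarith [abs_nonneg (((n:ℤ):ℝ) - ((k:ℤ):ℝ))]
      calc Real.exp (-c₀ * |(j:ℝ) - ((n:ℤ):ℝ)|) * ‖φh ((n:ℤ) - (k:ℤ)) * ξ (k:ℤ)‖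
          ≤ Real.exp (-c₀ * |(j:ℝ) - ((n:ℤ):ℝ)|)
            * (Real.exp (-ρ * |((n:ℤ):ℝ) - ((k:ℤ):ℝ)|) * (Cbar * (1 + |((k:ℤ):ℝ)|))) := by
            exact mul_le_mul_of_nonneg_left (hbound (n:ℤ) (k:ℤ)) (Real.exp_pos _).le
        _ = (Real.exp (-c₀ * |(j:ℝ) - ((n:ℤ):ℝ)|)
              * Real.exp (-ρ * |((n:ℤ):ℝ) - ((k:ℤ):ℝ)|)) * (Cbar * (1 + |((k:ℤ):ℝ)|)) := by
            ring
        _ ≤ (Real.exp (-c₀ * (x - Real.sqrt x))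
              * Real.exp (-(ρ/2) * |((n:ℤ):ℝ) - ((k:ℤ):ℝ)|))
            * (Cbar * ((1 + 3 * x ^ C₁) * (1 + |((n:ℤ):ℝ) - ((k:ℤ):ℝ)|))) := by
            apply mul_le_mul he1 (mul_le_mul_of_nonneg_left hkb hCbar.le) (by positivity)
              (by positivity)
        _ = C2 * (Real.exp (-(ρ/2) * |((n:ℤ):ℝ) - ((k:ℤ):ℝ)|)
              * (1 + |((n:ℤ):ℝ) - ((k:ℤ):ℝ)|)) := by
            rw [hC2def]; ring
    have hsubM : Summable (fun k : ↑((Λ : Set ℤ)ᶜ) =>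
        Real.exp (-(ρ/2) * |((n:ℤ):ℝ) - ((k:ℤ):ℝ)|) * (1 + |((n:ℤ):ℝ) - ((k:ℤ):ℝ)|)) := by
      have := (shifted_summable hρ2 (n:ℤ)).subtype ((Λ : Set ℤ)ᶜ : Set ℤ)
      exact this
    have htsum1 : Real.exp (-c₀ * |(j:ℝ) - ((n:ℤ):ℝ)|)
        * ∑' k : ↑((Λ : Set ℤ)ᶜ), ‖φh ((n:ℤ) - (k:ℤ)) * ξ (k:ℤ)‖ ≤ C2 * S := by
      rw [← tsum_mul_left]
      calc (∑' k : ↑((Λ : Set ℤ)ᶜ),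
              Real.exp (-c₀ * |(j:ℝ) - ((n:ℤ):ℝ)|) * ‖φh ((n:ℤ) - (k:ℤ)) * ξ (k:ℤ)‖)
          ≤ ∑' k : ↑((Λ : Set ℤ)ᶜ), C2 * (Real.exp (-(ρ/2) * |((n:ℤ):ℝ) - ((k:ℤ):ℝ)|)
              * (1 + |((n:ℤ):ℝ) - ((k:ℤ):ℝ)|)) :=
            Summable.tsum_le_tsum hterm2 (hsub.mul_left _) (hsubM.mul_left _)
        _ = C2 * ∑' k : ↑((Λ : Set ℤ)ᶜ), Real.exp (-(ρ/2) * |((n:ℤ):ℝ) - ((k:ℤ):ℝ)|)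
              * (1 + |((n:ℤ):ℝ) - ((k:ℤ):ℝ)|) := tsum_mul_left
        _ ≤ C2 * ∑' k : ℤ, Real.exp (-(ρ/2) * |((n:ℤ):ℝ) - (k:ℝ)|)
              * (1 + |((n:ℤ):ℝ) - (k:ℝ)|) := by
            apply mul_le_mul_of_nonneg_left ?_ hC20
            exact Summable.tsum_subtype_le
              (fun k : ℤ => Real.exp (-(ρ/2) * |((n:ℤ):ℝ) - (k:ℝ)|)
                * (1 + |((n:ℤ):ℝ) - (k:ℝ)|)) _ (fun k => by positivity)
              (shifted_summable hρ2 (n:ℤ))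
        _ = C2 * S := by rw [shifted_tsum_eq, hSdef]
    rw [norm_mul]
    calc ‖A⁻¹ j' n‖ * ‖bfun n‖
        ≤ Real.exp (-c₀ * (|(j:ℝ) - ((n:ℤ):ℝ)| - δ * x))
          * (ε * ∑' k : ↑((Λ : Set ℤ)ᶜ), ‖φh ((n:ℤ) - (k:ℤ)) * ξ (k:ℤ)‖) :=
          mul_le_mul hGn hb1 (norm_nonneg _) (Real.exp_pos _).le
      _ = ε * (Real.exp (c₀ * (δ * x)) * (Real.exp (-c₀ * |(j:ℝ) - ((n:ℤ):ℝ)|)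
            * ∑' k : ↑((Λ : Set ℤ)ᶜ), ‖φh ((n:ℤ) - (k:ℤ)) * ξ (k:ℤ)‖)) := by
          rw [show -c₀ * (|(j:ℝ) - ((n:ℤ):ℝ)| - δ * x)
              = c₀ * (δ * x) + -c₀ * |(j:ℝ) - ((n:ℤ):ℝ)| by ring, Real.exp_add]
          ring
      _ ≤ ε * (Real.exp (c₀ * (δ * x)) * (C2 * S)) := by
          apply mul_le_mul_of_nonneg_left ?_ hε.le
          exact mul_le_mul_of_nonneg_left htsum1 (Real.exp_pos _).le
      _ ≤ 1 * (Real.exp (c₀ * (δ * x)) * (C2 * S)) := by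
          apply mul_le_mul_of_nonneg_right hε1.le
          exact mul_nonneg (Real.exp_pos _).le (mul_nonneg hC20 hS0)
      _ = Cbar * ((1 + 3 * x ^ C₁) * S) * Real.exp (-c₀ * (x - δ * x - Real.sqrt x)) := by
          rw [hC2def, show -c₀ * (x - δ * x - Real.sqrt x)
            = c₀ * (δ * x) + -c₀ * (x - Real.sqrt x) by ring, Real.exp_add]
          ring
  -- summing up
  have hcard : ((Λ.card : ℕ) : ℝ) = 2 * x + 1 := by
    rw [hΛ, Int.card_Icc, hxdef]
    rw [show (j + m + (N:ℤ) + 1 - (j + m - (N:ℤ))).toNat = 2 * N + 1 by omega]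
    push_cast; ring
  have hTOT0 : 0 ≤ (2 * x + 1) * (Cbar * ((1 + 3 * x ^ C₁) * S)) := by
    apply mul_nonneg (by positivity)
    exact mul_nonneg hCbar.le (mul_nonneg (by positivity) hS0)
  have hsum_le : ‖ξ j‖ ≤ (2 * x + 1) * (Cbar * ((1 + 3 * x ^ C₁) * S)
      * Real.exp (-c₀ * (x - δ * x - Real.sqrt x))) := by
    rw [hxi]
    calc ‖∑ n : Λ, A⁻¹ j' n * bfun n‖ ≤ ∑ n : Λ, ‖A⁻¹ j' n * bfun n‖ := norm_sum_le _ _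
      _ ≤ Finset.univ.card • (Cbar * ((1 + 3 * x ^ C₁) * S)
            * Real.exp (-c₀ * (x - δ * x - Real.sqrt x))) :=
          Finset.sum_le_card_nsmul _ _ _ (fun n _ => hper n)
      _ = ((Λ.card : ℕ) : ℝ) * (Cbar * ((1 + 3 * x ^ C₁) * S)
            * Real.exp (-c₀ * (x - δ * x - Real.sqrt x))) := by
          rw [Finset.card_univ, Fintype.card_coe, nsmul_eq_mul]
      _ = (2 * x + 1) * (Cbar * ((1 + 3 * x ^ C₁) * S)
            * Real.exp (-c₀ * (x - δ * x - Real.sqrt x))) := by rw [hcard]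
  have hTOT : (2 * x + 1) * (Cbar * ((1 + 3 * x ^ C₁) * S)) < Real.exp (c₀ * x / 6) := by
    have hCS : Cbar * S ≤ |Cbar * S| + 1 := by linarith [le_abs_self (Cbar * S)]
    have hCS0 : 0 ≤ Cbar * S := mul_nonneg hCbar.le hS0
    have hxC1 : 1 ≤ x ^ C₁ := le_trans hx1 hxC
    have hx1C : x ^ (1 + C₁) = x * x ^ C₁ := by rw [Real.rpow_add hx0, Real.rpow_one]
    have hA2 : (2 * x + 1) * (1 + 3 * x ^ C₁) ≤ 12 * x ^ (1 + C₁) := by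
      rw [hx1C]; nlinarith
    have h12 : 12 * (|Cbar * S| + 1) * x ^ (1 + C₁) < Real.exp (c₀ * x / 6) := by
      have h := mul_lt_mul_of_pos_right hP (Real.exp_pos ((c₀/6) * x))
      rw [one_mul] at h
      have hee : Real.exp (-(c₀/6) * x) * Real.exp ((c₀/6) * x) = 1 := by
        rw [← Real.exp_add]; norm_num
      calc 12 * (|Cbar * S| + 1) * x ^ (1 + C₁)
          = 12 * (|Cbar * S| + 1) * (x ^ (1 + C₁) * Real.exp (-(c₀/6) * x))
            * Real.exp ((c₀/6) * x) := by
            rw [mul_assoc (12 * (|Cbar * S| + 1))]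
            rw [mul_assoc (x ^ (1 + C₁))]
            rw [hee, mul_one]
        _ < Real.exp ((c₀/6) * x) := h
        _ = Real.exp (c₀ * x / 6) := by ring_nf
    calc (2 * x + 1) * (Cbar * ((1 + 3 * x ^ C₁) * S))
        = ((2 * x + 1) * (1 + 3 * x ^ C₁)) * (Cbar * S) := by ring
      _ ≤ (12 * x ^ (1 + C₁)) * (|Cbar * S| + 1) := by
          apply mul_le_mul hA2 hCS hCS0 (by positivity)
      _ = 12 * (|Cbar * S| + 1) * x ^ (1 + C₁) := by ring
      _ < Real.exp (c₀ * x / 6) := h12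
  have hgap : Real.exp (-c₀ * (x - δ * x - Real.sqrt x)) ≤ Real.exp (-(c₀ * x / 2)) := by
    apply Real.exp_le_exp.mpr
    have hδx : δ * x ≤ (1/400) * x := mul_le_mul_of_nonneg_right hε₀small.le hx0.le
    have hhalf : x / 2 ≤ x - δ * x - Real.sqrt x := by linarith
    have := mul_le_mul_of_nonneg_left hhalf hc₀.le
    linarith
  calc ‖ξ j‖ ≤ (2 * x + 1) * (Cbar * ((1 + 3 * x ^ C₁) * S)
        * Real.exp (-c₀ * (x - δ * x - Real.sqrt x))) := hsum_le
    _ = ((2 * x + 1) * (Cbar * ((1 + 3 * x ^ C₁) * S)))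
        * Real.exp (-c₀ * (x - δ * x - Real.sqrt x)) := by ring
    _ ≤ ((2 * x + 1) * (Cbar * ((1 + 3 * x ^ C₁) * S))) * Real.exp (-(c₀ * x / 2)) :=
        mul_le_mul_of_nonneg_left hgap hTOT0
    _ < Real.exp (c₀ * x / 6) * Real.exp (-(c₀ * x / 2)) :=
        mul_lt_mul_of_pos_right hTOT (Real.exp_pos _)
    _ = Real.exp (-c₀ * (N:ℝ) / 3) := by
        rw [← Real.exp_add, hxdef]
        ring_nf
end
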